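/- arXiv:1107.2470 — 6 statements merged into one kernel-verified Lean document; each statement's English description precedes it below -/
import Mathlib

section
/- Let p ≥ 3 be a prime and n ≥ 1 an integer. Define T_p(n) as the sum over all tuples (x₁,…,xₙ) with each xᵢ in {1,…,p-1} and x₁+⋯+xₙ ≡ 0 (mod p) of the Legendre symbol ((x₁·x₂·⋯·xₙ)/p). Then T_p(n) = 0 if n is odd, and T_p(n) = p^{(n-2)/2}·(p-1)·((-1/p))^{n/2} if n is even. -/
open Finset

section Aux
variable (p : ℕ) [Fact p.Prime]

private def Saux (n : ℕ) (a : ZMod p) : ℤ :=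
  ∑ x ∈ Finset.univ.filter
      (fun x : Fin n → ZMod p => (∀ i, x i ≠ 0) ∧ ∑ i, x i = a),
    quadraticChar (ZMod p) (∏ i, x i)

variable {p}

private lemma Saux_one (a : ZMod p) : Saux p 1 a = quadraticChar (ZMod p) a := by
  classical
  rw [Saux, Finset.sum_filter,
    Fintype.sum_equiv (Equiv.funUnique (Fin 1) (ZMod p)) _
      (fun y : ZMod p => if y ≠ 0 ∧ y = a then quadraticChar (ZMod p) y else 0)
      (fun x => by simp [Fin.forall_fin_one, Fin.sum_univ_one, Fin.prod_univ_one,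
        Equiv.funUnique])]
  by_cases ha : a = 0
  · simp [ha]
  · rw [Finset.sum_eq_single a (fun b _ hb => by simp [hb]) (by simp)]
    simp [ha]

private lemma Saux_succ (n : ℕ) (a : ZMod p) :
    Saux p (n + 1) a =
      ∑ y : ZMod p, quadraticChar (ZMod p) y * Saux p n (a - y) := by
  classical
  simp only [Saux, Finset.sum_filter, Finset.mul_sum]
  rw [← Fintype.sum_equiv (Fin.consEquiv (fun _ : Fin (n + 1) => ZMod p))
    (fun q : ZMod p × (Fin n → ZMod p) =>
      quadraticChar (ZMod p) q.1 *
        (if (∀ i, q.2 i ≠ 0) ∧ ∑ i, q.2 i = a - q.1 then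
          quadraticChar (ZMod p) (∏ i, q.2 i) else 0))
    _ ?_]
  · rw [Fintype.sum_prod_type]
  · rintro ⟨y, x⟩
    simp only [Fin.consEquiv_apply, Fin.forall_fin_succ, Fin.cons_zero, Fin.cons_succ,
      Fin.sum_cons, Fin.prod_cons]
    by_cases hy : y = 0
    · simp [hy]
    · by_cases hc : (∀ i : Fin n, x i ≠ 0) ∧ ∑ i : Fin n, x i = a - y
      · rw [if_pos hc, if_pos, map_mul]
        exact ⟨⟨hy, hc.1⟩, by rw [hc.2]; ring⟩
      · rw [if_neg hc, if_neg, mul_zero]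
        rintro ⟨⟨-, h1⟩, h2⟩
        exact hc ⟨h1, by rw [← h2]; ring⟩

private lemma Saux_smul (n : ℕ) {c : ZMod p} (hc : c ≠ 0) (a : ZMod p) :
    Saux p n (c * a) = quadraticChar (ZMod p) c ^ n * Saux p n a := by
  classical
  rw [Saux, Saux, Finset.mul_sum]
  refine Finset.sum_nbij' (fun x => fun i => c⁻¹ * x i) (fun x => fun i => c * x i)
    ?_ ?_ ?_ ?_ ?_
  · intro x hx
    simp only [Finset.mem_filter, Finset.mem_univ, true_and] at hx ⊢
    refine ⟨fun i => mul_ne_zero (inv_ne_zero hc) (hx.1 i), ?_⟩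
    rw [← Finset.mul_sum, hx.2, ← mul_assoc, inv_mul_cancel₀ hc, one_mul]
  · intro x hx
    simp only [Finset.mem_filter, Finset.mem_univ, true_and] at hx ⊢
    refine ⟨fun i => mul_ne_zero hc (hx.1 i), ?_⟩
    rw [← Finset.mul_sum, hx.2]
  · intro x _; funext i; field_simp
  · intro x _; funext i; field_simp
  · intro x hx
    rw [Finset.prod_mul_distrib, Finset.prod_const, map_mul, map_pow,
      Finset.card_univ, Fintype.card_fin, ← mul_assoc, ← mul_pow, ← map_mul,
      mul_inv_cancel₀ hc, map_one, one_pow, one_mul]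

end Aux

section Aux2
variable {p : ℕ} [Fact p.Prime]

private lemma ringChar_ne_two (hp : 3 ≤ p) : ringChar (ZMod p) ≠ 2 := by
  rw [ZMod.ringChar_zmod_n]; omega

private lemma char_sum_zero (hp : 3 ≤ p) : ∑ y : ZMod p, quadraticChar (ZMod p) y = 0 :=
  quadraticChar_sum_zero (ringChar_ne_two hp)

private lemma card_zmod_int : ((Fintype.card (ZMod p) : ℤ)) = (p : ℤ) := by
  rw [ZMod.card]

private lemma char_mul_neg_sum (hp : 3 ≤ p) :
    ∑ y : ZMod p, quadraticChar (ZMod p) y * quadraticChar (ZMod p) (-y) =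
      quadraticChar (ZMod p) (-1) * ((p : ℤ) - 1) := by
  have h : ∀ y : ZMod p,
      quadraticChar (ZMod p) y * quadraticChar (ZMod p) (-y) =
        quadraticChar (ZMod p) (-1) * (if y = 0 then 0 else 1) := by
    intro y
    by_cases hy : y = 0
    · simp [hy]
    · rw [if_neg hy, mul_one, show -y = -1 * y by ring, map_mul, ← mul_assoc,
        mul_comm (quadraticChar (ZMod p) y), mul_assoc, ← sq, quadraticChar_sq_one hy,
        mul_one]
  rw [Finset.sum_congr rfl (fun y _ => h y), ← Finset.mul_sum]
  congr 1
  rw [Finset.sum_ite, Finset.sum_const, Finset.sum_const, smul_zero, zero_add,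
    nsmul_eq_mul, mul_one, Finset.filter_ne', Finset.card_erase_of_mem (Finset.mem_univ _),
    Finset.card_univ, ZMod.card]
  have h1 : 1 ≤ p := by omega
  omega

private lemma Saux_odd (hp : 3 ≤ p) {n : ℕ} (hn : Odd n) : Saux p n 0 = 0 := by
  obtain ⟨c, hc⟩ := quadraticChar_exists_neg_one (ringChar_ne_two hp)
  have hc0 : c ≠ 0 := by
    intro h; rw [h, quadraticChar_zero] at hc; omega
  have := Saux_smul n hc0 (0 : ZMod p)
  rw [mul_zero, hc, hn.neg_one_pow] at this
  linarith

private lemma Saux_total (hp : 3 ≤ p) {n : ℕ} (hn : 1 ≤ n) :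
    ∑ a : ZMod p, Saux p n a = 0 := by
  classical
  have hfilter : ∀ a : ZMod p,
      (Finset.univ.filter
        (fun x : Fin n → ZMod p => (∀ i, x i ≠ 0) ∧ ∑ i, x i = a)) =
      (Finset.univ.filter (fun x : Fin n → ZMod p => ∀ i, x i ≠ 0)).filter
        (fun x => ∑ i, x i = a) := by
    intro a; rw [Finset.filter_filter]
  simp only [Saux, hfilter]
  rw [Finset.sum_fiberwise]
  have hpi : (Finset.univ.filter (fun x : Fin n → ZMod p => ∀ i, x i ≠ 0)) =
      Fintype.piFinset (fun _ : Fin n => Finset.univ.filter (· ≠ 0)) := by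
    ext x; simp [Fintype.mem_piFinset]
  rw [hpi]
  have : ∀ x ∈ Fintype.piFinset (fun _ : Fin n => Finset.univ.filter (· ≠ 0)),
      quadraticChar (ZMod p) (∏ i, x i) = ∏ i, quadraticChar (ZMod p) (x i) :=
    fun x _ => map_prod _ _ _
  rw [Finset.sum_congr rfl this, ← Finset.prod_univ_sum]
  have h1 : ∑ y ∈ Finset.univ.filter (· ≠ 0), quadraticChar (ZMod p) y = 0 := by
    rw [Finset.sum_filter_of_ne (fun y _ hy => by
      intro h; rw [h, quadraticChar_zero] at hy; exact hy rfl)]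
    exact char_sum_zero hp
  rw [Finset.prod_congr rfl (fun i _ => h1), Finset.prod_const, zero_pow]
  simpa using Nat.one_le_iff_ne_zero.mp hn

private lemma Saux_even_one (hp : 3 ≤ p) {n : ℕ} (hn : 1 ≤ n) (he : Even n) :
    Saux p n 0 = -((p : ℤ) - 1) * Saux p n 1 := by
  classical
  have htot := Saux_total hp hn
  rw [← Finset.add_sum_erase _ _ (Finset.mem_univ (0 : ZMod p))] at htot
  have h1 : ∀ a ∈ Finset.univ.erase (0 : ZMod p), Saux p n a = Saux p n 1 := by
    intro a ha
    have ha0 : a ≠ 0 := (Finset.mem_erase.mp ha).1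
    have := Saux_smul n ha0 (1 : ZMod p)
    rw [mul_one] at this
    obtain ⟨m, hm⟩ := he
    rw [this, show n = 2 * m by omega, pow_mul, sq, ← map_mul, ← sq,
      quadraticChar_sq_one' ha0, one_pow, one_mul]
  rw [Finset.sum_congr rfl h1, Finset.sum_const, Finset.card_erase_of_mem (Finset.mem_univ _),
    Finset.card_univ, ZMod.card] at htot
  have hcast : ((p - 1 : ℕ) : ℤ) = (p : ℤ) - 1 := by
    have : 1 ≤ p := by omega
    push_cast [this]; ring
  rw [nsmul_eq_mul, hcast] at htot
  linarith

private lemma Saux_step (hp : 3 ≤ p) {n : ℕ} (hn : 1 ≤ n) (he : Even n) :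
    Saux p (n + 2) 0 =
      quadraticChar (ZMod p) (-1) * (p : ℤ) * Saux p n 0 := by
  classical
  have key : Saux p (n + 2) 0 =
      quadraticChar (ZMod p) (-1) * ((p : ℤ) - 1) * (Saux p n 0 - Saux p n 1) := by
    rw [show n + 2 = (n + 1) + 1 from rfl, Saux_succ]
    have inner : ∀ y : ZMod p,
        Saux p (n + 1) (0 - y) =
          quadraticChar (ZMod p) (-y) * (Saux p n 0 - Saux p n 1) := by
      intro y
      rw [Saux_succ]
      have h2 : ∀ z : ZMod p,
          quadraticChar (ZMod p) z * Saux p n (0 - y - z) =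
            (if z = -y then quadraticChar (ZMod p) (-y) * (Saux p n 0 - Saux p n 1) else 0)
            + quadraticChar (ZMod p) z * Saux p n 1 := by
        intro z
        by_cases hz : z = -y
        · rw [if_pos hz, hz, show (0 : ZMod p) - y - -y = 0 by ring]
          ring
        · rw [if_neg hz]
          have hnz : (0 : ZMod p) - y - z ≠ 0 := by
            intro h; apply hz; linear_combination -h
          have := Saux_smul n hnz (1 : ZMod p)
          obtain ⟨m, hm⟩ := he
          rw [show (0:ZMod p) - y - z = ((0:ZMod p) - y - z) * 1 by ring, this,
            show n = 2 * m by omega, pow_mul, sq, ← map_mul, ← sq,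
            quadraticChar_sq_one' hnz, one_pow, one_mul, zero_add]
      rw [Finset.sum_congr rfl (fun z _ => h2 z), Finset.sum_add_distrib,
        Finset.sum_ite_eq' Finset.univ (-y), if_pos (Finset.mem_univ _),
        ← Finset.sum_mul, char_sum_zero hp, zero_mul, add_zero]
    rw [Finset.sum_congr rfl (fun y _ => by rw [inner y, ← mul_assoc]), ← Finset.sum_mul,
      char_mul_neg_sum hp]
  have hE := Saux_even_one hp hn he
  rw [key]
  linear_combination (-(quadraticChar (ZMod p) (-1))) * hE

private lemma Saux_two (hp : 3 ≤ p) :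
    Saux p 2 0 = quadraticChar (ZMod p) (-1) * ((p : ℤ) - 1) := by
  rw [show (2:ℕ) = 1 + 1 from rfl, Saux_succ]
  have : ∀ y : ZMod p, quadraticChar (ZMod p) y * Saux p 1 (0 - y) =
      quadraticChar (ZMod p) y * quadraticChar (ZMod p) (-y) := by
    intro y; rw [Saux_one, zero_sub]
  rw [Finset.sum_congr rfl (fun y _ => this y), char_mul_neg_sum hp]

private lemma Saux_even (hp : 3 ≤ p) (k : ℕ) :
    Saux p (2 * k + 2) 0 =
      (p : ℤ) ^ k * ((p : ℤ) - 1) * quadraticChar (ZMod p) (-1) ^ (k + 1) := by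
  induction k with
  | zero => rw [show 2*0+2 = 2 from rfl, Saux_two hp]; ring
  | succ k ih =>
    have := Saux_step hp (n := 2 * k + 2) (by omega) ⟨k + 1, by ring⟩
    rw [show 2 * (k + 1) + 2 = 2 * k + 2 + 2 by ring, this, ih]
    ring

end Aux2

/-- For an odd prime `p` and `n ≥ 1`, the sum of `((x₁⋯xₙ)/p)` over tuples of
nonzero residues mod `p` with `x₁+⋯+xₙ ≡ 0 (mod p)` is `0` for odd `n` and
`p^((n-2)/2)·(p-1)·((-1/p))^(n/2)` for even `n`. -/
theorem T_p_n_n_zero (p : ℕ) [Fact p.Prime] (hp : 3 ≤ p) (n : ℕ) (hn : 1 ≤ n) :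
    (∑ x ∈ Finset.univ.filter
        (fun x : Fin n → ZMod p => (∀ i, x i ≠ 0) ∧ ∑ i, x i = 0),
      quadraticChar (ZMod p) (∏ i, x i)) =
      if Odd n then 0
      else (p : ℤ) ^ ((n - 2) / 2) * ((p : ℤ) - 1) * (legendreSym p (-1)) ^ (n / 2) := by
  have hmain : (∑ x ∈ Finset.univ.filter
        (fun x : Fin n → ZMod p => (∀ i, x i ≠ 0) ∧ ∑ i, x i = 0),
      quadraticChar (ZMod p) (∏ i, x i)) = Saux p n 0 := rfl
  rw [hmain]
  clear hmain
  by_cases ho : Odd n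
  · rw [if_pos ho, Saux_odd hp ho]
  · rw [if_neg ho]
    have he : Even n := Nat.not_odd_iff_even.mp ho
    obtain ⟨m, hm⟩ := he
    have hm1 : 1 ≤ m := by omega
    have hleg : legendreSym p (-1) = quadraticChar (ZMod p) (-1) := by
      rw [legendreSym, Int.cast_neg, Int.cast_one]
    rw [show n = 2 * (m - 1) + 2 by omega, Saux_even hp (m - 1), hleg,
      show (2 * (m - 1) + 2 - 2) / 2 = m - 1 by omega,
      show (2 * (m - 1) + 2) / 2 = (m - 1) + 1 by omega]
end

section
/- Let p ≥ 3 be a prime, n ≥ 1 an integer, and a an integer with gcd(a,p)=1. Define S_p(n,a) as the sum over all tuples (x₁,…,xₙ) with each xᵢ in {1,…,p-1} and x₁+⋯+xₙ ≡ a (mod p) of the Legendre symbol ((x₁·⋯·xₙ)/p). Then S_p(n,a) = (a/p)·p^{(n-1)/2}·((-1/p))^{(n-1)/2} if n is odd, and S_p(n,a) = -p^{(n-2)/2}·((-1/p))^{n/2} if n is even. -/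
namespace TpnAux

variable (p : ℕ) [Fact p.Prime]

/-- The unrestricted character sum. -/
def S (n : ℕ) (a : ZMod p) : ℤ :=
  ∑ x : Fin n → ZMod p,
    if (∑ i, x i) = a then quadraticChar (ZMod p) (∏ i, x i) else 0

/-- The closed-form value. -/
def F (n : ℕ) (a : ZMod p) : ℤ :=
  if a = 0 then
    (if Odd n then 0
     else ((p : ℤ) - 1) * (quadraticChar (ZMod p) (-1)) ^ (n / 2) * (p : ℤ) ^ (n / 2 - 1))
  else
    (if Odd n then
      quadraticChar (ZMod p) a * (quadraticChar (ZMod p) (-1)) ^ (n / 2) * (p : ℤ) ^ (n / 2)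
     else -(quadraticChar (ZMod p) (-1)) ^ (n / 2) * (p : ℤ) ^ (n / 2 - 1))

lemma hchar (hp : 3 ≤ p) : ringChar (ZMod p) ≠ 2 := by
  rw [ZMod.ringChar_zmod_n]; omega

lemma sum_chi (hp : 3 ≤ p) : ∑ b : ZMod p, quadraticChar (ZMod p) b = 0 :=
  quadraticChar_sum_zero (hchar p hp)

lemma jacobi (hp : 3 ≤ p) {a : ZMod p} (ha : a ≠ 0) :
    ∑ b : ZMod p, quadraticChar (ZMod p) b * quadraticChar (ZMod p) (a - b)
      = -quadraticChar (ZMod p) (-1) := by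
  set χ := quadraticChar (ZMod p) with hχ
  calc ∑ b : ZMod p, χ b * χ (a - b)
      = ∑ b : ZMod p, χ (b * (a - b)) := by
        refine Finset.sum_congr rfl fun b _ => ?_
        rw [map_mul]
    _ = ∑ c : ZMod p, χ (a * c * (a - a * c)) :=
        (Fintype.sum_equiv (Equiv.mulLeft₀ a ha) _ _ (fun c => rfl)).symm
    _ = ∑ c : ZMod p, χ (c * (1 - c)) := by
        refine Finset.sum_congr rfl fun c _ => ?_
        have h : a * c * (a - a * c) = a ^ 2 * (c * (1 - c)) := by ring
        rw [h, map_mul, hχ, quadraticChar_sq_one' ha, one_mul]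
    _ = ∑ c : ZMod p, (χ (c⁻¹ - 1) - if c = 0 then χ (-1) else 0) := by
        refine Finset.sum_congr rfl fun c _ => ?_
        by_cases hc : c = 0
        · simp [hc, hχ]
        · have h : c * (1 - c) = c ^ 2 * (c⁻¹ - 1) := by
            field_simp
          rw [h, map_mul, hχ, quadraticChar_sq_one' hc, one_mul, if_neg hc, sub_zero]
    _ = (∑ c : ZMod p, χ (c⁻¹ - 1)) - χ (-1) := by
        rw [Finset.sum_sub_distrib, Finset.sum_ite_eq' Finset.univ (0 : ZMod p)
          (fun _ => χ (-1))]
        simp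
    _ = -χ (-1) := by
        have h1 : (∑ c : ZMod p, χ (c⁻¹ - 1)) = ∑ d : ZMod p, χ (d - 1) :=
          Fintype.sum_bijective Inv.inv inv_involutive.bijective _ _ (fun c => rfl)
        have h2 : (∑ d : ZMod p, χ (d - 1)) = ∑ e : ZMod p, χ e :=
          Fintype.sum_equiv (Equiv.subRight (1 : ZMod p)) _ _ (fun d => rfl)
        rw [h1, h2, sum_chi p hp, zero_sub]

lemma sumsq (hp : 3 ≤ p) :
    ∑ b : ZMod p, quadraticChar (ZMod p) b * quadraticChar (ZMod p) (-b)
      = quadraticChar (ZMod p) (-1) * ((p : ℤ) - 1) := by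
  set χ := quadraticChar (ZMod p) with hχ
  have h : ∀ b : ZMod p, χ b * χ (-b) = χ (-1) * (if b = 0 then 0 else 1) := by
    intro b
    by_cases hb : b = 0
    · simp [hb, hχ]
    · have h1 : (-b) = -1 * b := by ring
      have h2 : χ b * χ (-b) = χ (-1) * (χ b * χ b) := by
        rw [h1, map_mul]; ring
      rw [h2, ← pow_two, hχ, quadraticChar_sq_one hb, if_neg hb, mul_one]
  simp_rw [h]
  rw [← Finset.mul_sum]
  congr 1
  have : (∑ b : ZMod p, (if b = 0 then (0:ℤ) else 1))
      = ((Finset.univ.erase (0 : ZMod p)).card : ℤ) := by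
    rw [Finset.sum_ite, Finset.sum_const, Finset.sum_const]
    have : Finset.univ.filter (fun b : ZMod p => ¬b = 0) = Finset.univ.erase 0 := by
      ext b; simp [Finset.mem_erase, and_comm]
    rw [this]
    simp
  rw [this, Finset.card_erase_of_mem (Finset.mem_univ _), Finset.card_univ, ZMod.card]
  have hp1 : 1 ≤ p := by omega
  push_cast [hp1]
  ring

lemma S_one (a : ZMod p) : S p 1 a = quadraticChar (ZMod p) a := by
  unfold S
  have h : (∑ x : Fin 1 → ZMod p,
      if (∑ i, x i) = a then quadraticChar (ZMod p) (∏ i, x i) else 0)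
      = ∑ c : ZMod p, if c = a then quadraticChar (ZMod p) c else 0 :=
    Fintype.sum_equiv (Equiv.funUnique (Fin 1) (ZMod p)) _ _
      (fun x => by simp)
  rw [h, Finset.sum_ite_eq' Finset.univ a]
  simp

set_option maxHeartbeats 1000000 in
lemma S_succ (n : ℕ) (a : ZMod p) :
    S p (n + 1) a = ∑ b : ZMod p, quadraticChar (ZMod p) b * S p n (a - b) := by
  unfold S
  set χ := quadraticChar (ZMod p) with hχ
  calc (∑ x : Fin (n + 1) → ZMod p, if (∑ i, x i) = a then χ (∏ i, x i) else 0)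
      = ∑ q : ZMod p × (Fin n → ZMod p),
          if (∑ i, (Fin.cons q.1 q.2 : Fin (n + 1) → ZMod p) i) = a
            then χ (∏ i, (Fin.cons q.1 q.2 : Fin (n + 1) → ZMod p) i) else 0 :=
        (Fintype.sum_equiv (Fin.consEquiv (fun _ : Fin (n + 1) => ZMod p))
          (fun q : ZMod p × (Fin n → ZMod p) =>
            if (∑ i, (Fin.cons q.1 q.2 : Fin (n + 1) → ZMod p) i) = a
              then χ (∏ i, (Fin.cons q.1 q.2 : Fin (n + 1) → ZMod p) i) else 0)
          (fun x : Fin (n + 1) → ZMod p =>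
            if (∑ i, x i) = a then χ (∏ i, x i) else 0)
          (fun q => rfl)).symm
    _ = ∑ b : ZMod p, ∑ y : Fin n → ZMod p,
          if (b + ∑ i, y i) = a then χ (b * ∏ i, y i) else 0 := by
        rw [Fintype.sum_prod_type]
        exact Finset.sum_congr rfl fun b _ => Finset.sum_congr rfl fun y _ => by
          simp only [Fin.sum_cons, Fin.prod_cons]
    _ = ∑ b : ZMod p, χ b * ∑ y : Fin n → ZMod p,
          if (∑ i, y i) = a - b then χ (∏ i, y i) else 0 := by
        refine Finset.sum_congr rfl fun b _ => ?_
        rw [Finset.mul_sum]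
        refine Finset.sum_congr rfl fun y _ => ?_
        rw [map_mul, mul_ite, mul_zero]
        exact if_congr eq_sub_iff_add_eq'.symm rfl rfl

lemma S_eq_F (hp : 3 ≤ p) : ∀ n, 1 ≤ n → ∀ a : ZMod p, S p n a = F p n a := by
  intro n hn
  induction n, hn using Nat.le_induction with
  | base =>
    intro a
    rw [S_one]
    unfold F
    by_cases ha : a = 0
    · simp [ha]
    · rw [if_neg ha, if_pos (by decide : Odd 1)]
      simp
  | succ n hn ih =>
    intro a
    set χ := quadraticChar (ZMod p) with hχ
    set ε := χ (-1) with hε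
    rw [S_succ]
    have hrw : (∑ b : ZMod p, χ b * S p n (a - b)) = ∑ b : ZMod p, χ b * F p n (a - b) :=
      Finset.sum_congr rfl fun b _ => by rw [ih]
    rw [hrw]
    rcases Nat.even_or_odd n with hev | hodd
    · -- n even, n+1 odd
      have hn2 : 2 ≤ n := by
        rcases hev with ⟨k, hk⟩; omega
      set k := n / 2 with hk
      have hk1 : 1 ≤ k := by omega
      have hnmod : n % 2 = 0 := Nat.even_iff.mp hev
      have hnodd : ¬ Odd n := Nat.not_odd_iff_even.mpr hev
      have hsplit : ∀ b : ZMod p, χ b * F p n (a - b)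
          = χ b * (-ε ^ k * (p : ℤ) ^ (k - 1))
            + (if b = a then χ a * ((p : ℤ) * ε ^ k * (p : ℤ) ^ (k - 1)) else 0) := by
        intro b
        unfold F
        by_cases hb : b = a
        · subst hb
          rw [if_pos (sub_self b), if_neg hnodd, if_pos rfl]
          ring
        · have hab : a - b ≠ 0 := sub_ne_zero.mpr (Ne.symm hb)
          rw [if_neg hab, if_neg hnodd, if_neg hb, add_zero, ← hε, ← hk]
      rw [Finset.sum_congr rfl (fun b _ => hsplit b), Finset.sum_add_distrib,
        ← Finset.sum_mul, sum_chi p hp, zero_mul, zero_add,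
        Finset.sum_ite_eq' Finset.univ a, if_pos (Finset.mem_univ a)]
      unfold F
      have hodd1 : Odd (n + 1) := hev.add_one
      have hhalf : (n + 1) / 2 = k := by omega
      by_cases ha : a = 0
      · rw [if_pos ha, if_pos hodd1]
        simp [ha, hχ]
      · rw [if_neg ha, if_pos hodd1, hhalf]
        have hpk : (p : ℤ) ^ k = (p : ℤ) ^ (k - 1) * (p : ℤ) := by
          rw [← pow_succ]
          congr 1
          omega
        rw [hpk]
        ring
    · -- n odd, n+1 even
      have hnmod : n % 2 = 1 := Nat.odd_iff.mp hodd
      set k := n / 2 with hk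
      have hFodd : ∀ x : ZMod p, F p n x = χ x * (ε ^ k * (p : ℤ) ^ k) := by
        intro x
        unfold F
        by_cases hx : x = 0
        · rw [if_pos hx, if_pos hodd, hx]
          simp [hχ]
        · rw [if_neg hx, if_pos hodd, ← hε, ← hχ, ← hk]
          ring
      have hsum : (∑ b : ZMod p, χ b * F p n (a - b))
          = (∑ b : ZMod p, χ b * χ (a - b)) * (ε ^ k * (p : ℤ) ^ k) := by
        rw [Finset.sum_mul]
        exact Finset.sum_congr rfl fun b _ => by rw [hFodd]; ring
      rw [hsum]
      have hnotodd : ¬ Odd (n + 1) := by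
        rw [Nat.not_odd_iff_even, Nat.even_add_one]
        exact Nat.not_even_iff_odd.mpr hodd
      have hhalf : (n + 1) / 2 = k + 1 := by omega
      unfold F
      by_cases ha : a = 0
      · subst ha
        have : (∑ b : ZMod p, χ b * χ (0 - b)) = ε * ((p : ℤ) - 1) := by
          rw [← sumsq p hp]
          exact Finset.sum_congr rfl fun b _ => by rw [zero_sub]
        rw [this, if_pos rfl, if_neg hnotodd, hhalf, Nat.add_sub_cancel, pow_succ]
        ring
      · rw [jacobi p hp ha, if_neg ha, if_neg hnotodd, hhalf, Nat.add_sub_cancel, pow_succ]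
        ring

end TpnAux

/-- For an odd prime `p`, `n ≥ 1` and `a` with `gcd(a,p)=1`, the sum of
`((x₁⋯xₙ)/p)` over tuples of nonzero residues mod `p` with `x₁+⋯+xₙ ≡ a (mod p)` is
`(a/p)·p^((n-1)/2)·((-1/p))^((n-1)/2)` for odd `n` and `-p^((n-2)/2)·((-1/p))^(n/2)`
for even `n`. -/
theorem T_p_n_n_a (p : ℕ) [Fact p.Prime] (hp : 3 ≤ p) (n : ℕ) (hn : 1 ≤ n)
    (a : ℤ) (ha : IsCoprime a (p : ℤ)) :
    (∑ x ∈ Finset.univ.filter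
        (fun x : Fin n → ZMod p => (∀ i, x i ≠ 0) ∧ ∑ i, x i = (a : ZMod p)),
      quadraticChar (ZMod p) (∏ i, x i)) =
      if Odd n then
        legendreSym p a * (p : ℤ) ^ ((n - 1) / 2) * (legendreSym p (-1)) ^ ((n - 1) / 2)
      else -(p : ℤ) ^ ((n - 2) / 2) * (legendreSym p (-1)) ^ (n / 2) := by
  have hOc : Odd n → (n - 1) / 2 = n / 2 := fun h => by
    have := Nat.odd_iff.mp h; omega
  have hEc : ¬Odd n → (n - 2) / 2 = n / 2 - 1 := fun h => by
    have := Nat.even_iff.mp (Nat.not_odd_iff_even.mp h); omega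
  have ha0 : ((a : ZMod p)) ≠ 0 := by
    intro h
    rw [ZMod.intCast_zmod_eq_zero_iff_dvd] at h
    have hu := ha.isUnit_of_dvd' h dvd_rfl
    rw [Int.isUnit_iff] at hu
    omega
  have h1 : (∑ x ∈ Finset.univ.filter
        (fun x : Fin n → ZMod p => (∀ i, x i ≠ 0) ∧ ∑ i, x i = (a : ZMod p)),
      quadraticChar (ZMod p) (∏ i, x i)) = TpnAux.S p n ((a : ZMod p)) := by
    rw [Finset.sum_filter]
    unfold TpnAux.S
    refine Finset.sum_congr rfl fun x _ => ?_
    by_cases hs : (∑ i, x i) = (a : ZMod p)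
    · by_cases hz : ∀ i, x i ≠ 0
      · simp [hs, hz]
      · push_neg at hz
        obtain ⟨i, hi⟩ := hz
        have h0 : (∏ i, x i) = 0 := Finset.prod_eq_zero (Finset.mem_univ i) hi
        simp [hs, h0]
    · simp [hs]
  rw [h1, TpnAux.S_eq_F p hp n hn]
  unfold TpnAux.F
  rw [if_neg ha0]
  have hleg : legendreSym p a = quadraticChar (ZMod p) ((a : ZMod p)) := rfl
  have hleg1 : legendreSym p (-1) = quadraticChar (ZMod p) (-1 : ZMod p) := by
    have : legendreSym p (-1) = quadraticChar (ZMod p) (((-1 : ℤ) : ZMod p)) := rfl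
    rw [this]
    norm_num
  by_cases hodd : Odd n
  · rw [if_pos hodd, if_pos hodd, hOc hodd, hleg, hleg1]
    ring
  · rw [if_neg hodd, if_neg hodd, hEc hodd, hleg1]
    ring
end

section
/- Let p ≥ 3 be a prime, α ≥ 2 an integer, and n, a integers with gcd(n,p)=1 and 1 ≤ a ≤ p^α - 1. Let S = Σ'_{b=1}^{p^α} e(n·b²·(a²-1)/p^α), where the sum is over b coprime to p and e(x) = e^{2πix}. Then: (i) if p^{α-1} ∤ (a²-1), S = 0; (ii) if p^{α-1} exactly divides a²-1, writing a = r·p^{α-1} + ε with 1 ≤ r ≤ p-1 and ε = ±1, then S = p^{α-1}·[((2εrn)/p)·G(1;p) - 1]; (iii) if p^α | a²-1, S = φ(p^α). -/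
open Complex Finset

/-!
Write `n (a² - 1) = p^β w` with `p ∤ w`. Since `e(p^β x / p^(β+γ)) = e(x / p^γ)` and being prime
to `p` is a `p^γ`-periodic condition, the sum is `p^β` times the same sum modulo `p^γ`, `γ = α - β`.
For `γ ≥ 2`, writing `b = s p^(γ-1) + y` gives `w b² ≡ w y² + p^(γ-1) · 2wys (mod p^γ)`, so the
sum over `s` is a complete sum of a nontrivial additive character modulo `p` and vanishes.
For `γ = 1` the sum over `b ≢ 0` is `∑_x e(w x²/p) - 1 = (w/p) G(1;p) - 1`, and in case (ii)
`a² - 1 = p^(α-1) (r² p^(α-1) + 2εr)` with `r² p^(α-1) + 2εr ≡ 2εr (mod p)`.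
If `p^α ∣ a² - 1` every term equals `1`.
-/

lemma sum_range_mul_eq_sum_sum {M : Type*} [AddCommMonoid M] (f : ℕ → M) (k m : ℕ) :
    ∑ b ∈ range (k * m), f b = ∑ t ∈ range k, ∑ x ∈ range m, f (t * m + x) := by
  induction k with
  | zero => simp
  | succ k ih => rw [Nat.succ_mul, sum_range_add, ih, sum_range_succ]

lemma Function.Periodic.sum_range_mul {M : Type*} [AddCommMonoid M] {f : ℕ → M} {m : ℕ}
    (hf : Function.Periodic f m) (k : ℕ) : ∑ b ∈ range (k * m), f b = k • ∑ b ∈ range m, f b := by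
  rw [sum_range_mul_eq_sum_sum, ← card_range k, ← sum_const, card_range]
  exact sum_congr rfl fun t _ => sum_congr rfl fun x _ => by
    rw [add_comm]; exact hf.nat_mul t x

lemma sum_range_natCast_eq_sum_zmod {M : Type*} [AddCommMonoid M] {N : ℕ} [NeZero N]
    (f : ZMod N → M) : ∑ x ∈ range N, f x = ∑ y : ZMod N, f y :=
  sum_nbij' Nat.cast ZMod.val (fun _ _ => mem_univ _)
    (fun y _ => mem_range.mpr (ZMod.val_lt y))
    (fun _ hx => ZMod.val_cast_of_lt (mem_range.mp hx)) (fun y _ => ZMod.natCast_zmod_val y)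
    (fun _ _ => rfl)

lemma sum_Icc_natCast_eq_sum_zmod {M : Type*} [AddCommMonoid M] {N : ℕ} [NeZero N]
    (f : ZMod N → M) : ∑ x ∈ Icc 1 N, f x = ∑ y : ZMod N, f y := by
  have := sum_Ico_add' (fun x : ℕ => f x) 0 N 1
  rw [zero_add, Ico_add_one_right_eq_Icc] at this
  rw [← this, ← Equiv.sum_comp (Equiv.addRight 1), ← sum_range_natCast_eq_sum_zmod, range_eq_Ico]
  simp

lemma filter_coprime_Icc_eq_filter_range {p q : ℕ} (hp : p ≠ 1) (hq : p ∣ q) :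
    (Icc 1 q).filter (·.Coprime p) = (range q).filter (·.Coprime p) := by
  ext b
  simp only [mem_filter, mem_Icc, mem_range]
  constructor
  · rintro ⟨⟨-, hbq⟩, hb⟩
    refine ⟨lt_of_le_of_ne hbq ?_, hb⟩
    rintro rfl
    exact hp (hb.symm.eq_one_of_dvd hq)
  · rintro ⟨hbq, hb⟩
    refine ⟨⟨Nat.pos_of_ne_zero ?_, hbq.le⟩, hb⟩
    rintro rfl
    exact hp ((Nat.coprime_zero_left p).mp hb)

lemma Nat.Prime.filter_coprime_range_eq_erase_zero {p : ℕ} (hp : p.Prime) :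
    (range p).filter (·.Coprime p) = (range p).erase 0 := by
  ext b
  simp only [mem_filter, mem_erase, mem_range, Nat.coprime_comm, hp.coprime_iff_not_dvd]
  exact ⟨fun ⟨hb, hdvd⟩ => ⟨fun h => hdvd (h ▸ dvd_zero p), hb⟩,
    fun ⟨h0, hb⟩ => ⟨hb, fun hdvd => h0 (Nat.eq_zero_of_dvd_of_lt hdvd hb)⟩⟩

lemma Nat.Prime.not_natCast_dvd_two {p : ℕ} (hp : p.Prime) (hp2 : p ≠ 2) : ¬ (p : ℤ) ∣ 2 :=
  fun h => hp2 <| (Nat.prime_dvd_prime_iff_eq hp Nat.prime_two).mp (by exact_mod_cast h)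

lemma ZMod.stdAddChar_intCast_mul_of_eq {d N M : ℕ} [NeZero N] [NeZero M] (hM : M = d * N)
    (k : ℤ) : ZMod.stdAddChar ((d * k : ℤ) : ZMod M) = ZMod.stdAddChar (k : ZMod N) := by
  subst hM
  have hd : (d : ℂ) ≠ 0 := by exact_mod_cast left_ne_zero_of_mul (NeZero.ne (d * N))
  have hN : (N : ℂ) ≠ 0 := by exact_mod_cast NeZero.ne N
  rw [ZMod.stdAddChar_coe, ZMod.stdAddChar_coe]
  congr 1
  push_cast
  field_simp

lemma ZMod.stdAddChar_mul_sq_add_pow_mul {p : ℕ} [NeZero p] (δ : ℕ) (w y s : ℤ) :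
    ZMod.stdAddChar ((w * (s * p ^ (δ + 1) + y) ^ 2 : ℤ) : ZMod (p ^ (δ + 2))) =
      ZMod.stdAddChar ((w * y ^ 2 : ℤ) : ZMod (p ^ (δ + 2))) *
        ZMod.stdAddChar ((2 * w * y * s : ℤ) : ZMod p) := by
  have hcast : ((w * (s * p ^ (δ + 1) + y) ^ 2 : ℤ) : ZMod (p ^ (δ + 2))) =
      ((w * y ^ 2 : ℤ) : ZMod (p ^ (δ + 2))) +
        (((p ^ (δ + 1) : ℕ) * (2 * w * y * s) : ℤ) : ZMod (p ^ (δ + 2))) := by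
    rw [← Int.cast_add, ZMod.intCast_eq_intCast_iff_dvd_sub]
    exact ⟨-(w * s ^ 2 * p ^ δ), by push_cast; ring⟩
  rw [hcast, AddChar.map_add_eq_mul, ZMod.stdAddChar_intCast_mul_of_eq (pow_succ p (δ + 1))]

lemma ZMod.sum_range_stdAddChar_mul_eq_zero {N : ℕ} [NeZero N] {c : ℤ} (hc : ¬ (N : ℤ) ∣ c) :
    ∑ s ∈ range N, ZMod.stdAddChar ((c * s : ℤ) : ZMod N) = 0 := by
  have hc' : (c : ZMod N) ≠ 0 := mt (ZMod.intCast_zmod_eq_zero_iff_dvd c N).mp hc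
  push_cast
  rw [sum_range_natCast_eq_sum_zmod (fun y => ZMod.stdAddChar ((c : ZMod N) * y))]
  simp_rw [mul_comm (c : ZMod N)]
  rw [AddChar.sum_mulShift _ (ZMod.isPrimitive_stdAddChar N), if_neg hc', Nat.cast_zero]

section
variable {F R : Type*} [Field F] [Fintype F] [DecidableEq F] [CommRing R]

lemma sum_comp_sq_eq_sum_quadraticChar_add_one (hF : ringChar F ≠ 2) (f : F → R) :
    ∑ x, f (x ^ 2) = ∑ z, ((quadraticChar F z + 1 : ℤ) : R) * f z := by
  rw [← sum_fiberwise' univ (· ^ 2) f]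
  refine sum_congr rfl fun z _ => ?_
  rw [sum_const, ← quadraticChar_card_sqrts hF z, nsmul_eq_mul, Int.cast_natCast]
  congr
  ext x
  simp

lemma AddChar.sum_mul_sq [IsDomain R] (hF : ringChar F ≠ 2) {ψ : AddChar F R}
    (hψ : ψ.IsPrimitive) {a : F} (ha : a ≠ 0) :
    ∑ x, ψ (a * x ^ 2) = quadraticChar F a * ∑ x, ψ (x ^ 2) := by
  have hlin {c : F} (hc : c ≠ 0) :
      ∑ x, ψ (c * x ^ 2) = ∑ z, (quadraticChar F z : R) * ψ (c * z) := by
    have hzero : ∑ z, ψ (c * z) = 0 := by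
      simp_rw [mul_comm c]
      rw [AddChar.sum_mulShift c hψ, if_neg hc, Nat.cast_zero]
    simp only [sum_comp_sq_eq_sum_quadraticChar_add_one hF (fun y => ψ (c * y)), Int.cast_add,
      Int.cast_one, add_mul, one_mul, sum_add_distrib, hzero, add_zero]
  have hscale : ∑ z, (quadraticChar F z : R) * ψ (a * z) =
      quadraticChar F a * ∑ z, (quadraticChar F z : R) * ψ z := by
    have hχ (z : F) : quadraticChar F z = quadraticChar F a * quadraticChar F (a * z) := by
      rw [map_mul, ← mul_assoc, ← sq, quadraticChar_sq_one ha, one_mul]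
    rw [mul_sum]
    refine Fintype.sum_bijective (a * ·) (mulLeft_bijective₀ a ha) _ _ fun z => ?_
    rw [hχ z, Int.cast_mul, mul_assoc]
  have hbase := hlin one_ne_zero
  simp only [one_mul] at hbase
  rw [hlin ha, hbase, hscale]
end

lemma sum_Icc_exp_sq_eq_sum_stdAddChar_sq (p : ℕ) [NeZero p] :
    ∑ b ∈ Icc 1 p, exp (2 * Real.pi * I * ((b : ℂ) ^ 2 / p)) =
      ∑ x : ZMod p, ZMod.stdAddChar (x ^ 2) := by
  rw [← sum_Icc_natCast_eq_sum_zmod]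
  refine sum_congr rfl fun b _ => ?_
  have h := ZMod.stdAddChar_coe (N := p) ((b : ℤ) ^ 2)
  push_cast at h
  rw [h]
  ring_nf

/-- `Σ'_{b < q} e(w b² / q)`, the sum running over the `b` prime to `p`. -/
noncomputable def restrictedQuadSum (p q : ℕ) [NeZero q] (w : ℤ) : ℂ :=
  ∑ b ∈ (range q).filter (·.Coprime p), ZMod.stdAddChar ((w * b ^ 2 : ℤ) : ZMod q)

lemma restrictedQuadSum_mul_mul {p q : ℕ} [NeZero q] (d : ℕ) [NeZero d] (hpq : p ∣ q) (w : ℤ) :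
    restrictedQuadSum p (d * q) (d * w) = d * restrictedQuadSum p q w := by
  set g : ℕ → ℂ := fun b => if b.Coprime p then ZMod.stdAddChar ((w * b ^ 2 : ℤ) : ZMod q) else 0
  have hg : Function.Periodic g q := fun b => by
    obtain ⟨c, rfl⟩ := hpq
    simp [g, Nat.coprime_add_mul_left_left]
  have hscale (b : ℕ) : ZMod.stdAddChar ((d * w * b ^ 2 : ℤ) : ZMod (d * q))
      = ZMod.stdAddChar ((w * b ^ 2 : ℤ) : ZMod q) := by
    rw [mul_assoc, ZMod.stdAddChar_intCast_mul_of_eq rfl]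
  calc restrictedQuadSum p (d * q) (d * w) = ∑ b ∈ range (d * q), g b := by
        simp only [restrictedQuadSum, sum_filter, g, hscale]
    _ = d * restrictedQuadSum p q w := by
        rw [hg.sum_range_mul, restrictedQuadSum, sum_filter, nsmul_eq_mul]

lemma restrictedQuadSum_of_dvd {p k : ℕ} [NeZero p] (hk : k ≠ 0) {w : ℤ} (hw : (p : ℤ) ^ k ∣ w) :
    restrictedQuadSum p (p ^ k) w = Nat.totient (p ^ k) := by
  have hone (b : ℕ) : ZMod.stdAddChar ((w * b ^ 2 : ℤ) : ZMod (p ^ k)) = 1 := by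
    rw [(ZMod.intCast_zmod_eq_zero_iff_dvd _ _).mpr (by exact_mod_cast hw.mul_right _),
      AddChar.map_zero_eq_one]
  rw [restrictedQuadSum, sum_congr rfl fun b _ => hone b, sum_const, nsmul_one,
    Nat.totient_eq_card_coprime]
  congr 2
  ext b
  simp only [mem_filter, Nat.coprime_comm, Nat.coprime_pow_left_iff (Nat.pos_of_ne_zero hk)]

section
variable {p : ℕ} [Fact p.Prime]

lemma restrictedQuadSum_pow_add_two_eq_zero (hp2 : p ≠ 2) (δ : ℕ) {w : ℤ}
    (hw : ¬ (p : ℤ) ∣ w) : restrictedQuadSum p (p ^ (δ + 2)) w = 0 := by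
  have hp : p.Prime := Fact.out
  have hpZ : Prime (p : ℤ) := Nat.prime_iff_prime_int.mp hp
  have hinner (y : ℕ) (hy : y.Coprime p) :
      ∑ s ∈ range p, ZMod.stdAddChar ((2 * w * y * s : ℤ) : ZMod p) = 0 := by
    refine ZMod.sum_range_stdAddChar_mul_eq_zero ?_
    have hy' : ¬ (p : ℤ) ∣ y := by
      exact_mod_cast (Nat.Prime.coprime_iff_not_dvd hp).mp hy.symm
    simp only [hpZ.dvd_mul, not_or]
    exact ⟨⟨hp.not_natCast_dvd_two hp2, hw⟩, hy'⟩
  have hcop (s y : ℕ) : (s * p ^ (δ + 1) + y).Coprime p ↔ y.Coprime p := by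
    rw [add_comm, pow_succ, ← mul_assoc, Nat.coprime_add_mul_right_left]
  have hrange : range (p ^ (δ + 2)) = range (p * p ^ (δ + 1)) := by rw [pow_succ']
  rw [restrictedQuadSum, sum_filter, hrange, sum_range_mul_eq_sum_sum, sum_comm]
  refine sum_eq_zero fun y _ => ?_
  simp only [hcop]
  split_ifs with hy
  · simp only [Nat.cast_add, Nat.cast_mul, Nat.cast_pow, ZMod.stdAddChar_mul_sq_add_pow_mul,
      ← mul_sum, hinner y hy, mul_zero]
  · exact sum_const_zero

lemma restrictedQuadSum_self (hp2 : p ≠ 2) {w : ℤ} (hw : ¬ (p : ℤ) ∣ w) :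
    restrictedQuadSum p p w = legendreSym p w * ∑ x : ZMod p, ZMod.stdAddChar (x ^ 2) - 1 := by
  have hw' : (w : ZMod p) ≠ 0 := mt (ZMod.intCast_zmod_eq_zero_iff_dvd w p).mp hw
  have hF : ringChar (ZMod p) ≠ 2 := by rwa [ZMod.ringChar_zmod_n]
  rw [restrictedQuadSum, (Fact.out : p.Prime).filter_coprime_range_eq_erase_zero,
    sum_erase_eq_sub (mem_range.mpr (NeZero.pos p))]
  push_cast
  rw [sum_range_natCast_eq_sum_zmod (N := p) (fun x => ZMod.stdAddChar ((w : ZMod p) * x ^ 2)),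
    AddChar.sum_mul_sq hF (ZMod.isPrimitive_stdAddChar p) hw']
  simp [legendreSym]

lemma restrictedQuadSum_eq_zero_of_not_dvd (hp2 : p ≠ 2) {k : ℕ} {w : ℤ}
    (hw : ¬ (p : ℤ) ^ (k - 1) ∣ w) : restrictedQuadSum p (p ^ k) w = 0 := by
  have hp : p.Prime := Fact.out
  have hw0 : w ≠ 0 := by rintro rfl; exact hw (dvd_zero _)
  obtain ⟨u, hwu, hu⟩ := (Int.finiteMultiplicity_iff (a := p)).mpr
    ⟨by simpa using hp.ne_one, hw0⟩ |>.exists_eq_pow_mul_and_not_dvd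
  set β := multiplicity (p : ℤ) w
  obtain ⟨δ, rfl⟩ : ∃ δ, k = β + (δ + 2) := by
    refine ⟨k - β - 2, ?_⟩
    by_contra h
    exact hw (hwu ▸ (pow_dvd_pow _ (by omega)).mul_right u)
  have h := restrictedQuadSum_mul_mul (p ^ β) (dvd_pow_self p (by omega : δ + 2 ≠ 0)) u
  rw [restrictedQuadSum_pow_add_two_eq_zero hp2 δ hu, mul_zero] at h
  convert h using 2
  · rw [pow_add]
  · push_cast
    exact hwu

lemma restrictedQuadSum_pow_succ_pow_mul (hp2 : p ≠ 2) (k : ℕ) {u : ℤ} (hu : ¬ (p : ℤ) ∣ u) :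
    restrictedQuadSum p (p ^ (k + 1)) (p ^ k * u) =
      p ^ k * (legendreSym p u * ∑ x : ZMod p, ZMod.stdAddChar (x ^ 2) - 1) := by
  have h := restrictedQuadSum_mul_mul (p ^ k) (dvd_refl p) u
  rw [restrictedQuadSum_self hp2 hu] at h
  convert h using 2 <;> push_cast [pow_succ] <;> rfl

lemma restrictedQuadSum_mul_sq_sub_one (hp2 : p ≠ 2) {k : ℕ} (hk : k ≠ 0) {n : ℤ}
    (hn : ¬ (p : ℤ) ∣ n) {r : ℕ} (hr : ¬ p ∣ r) {ε : ℤ} (hε : IsUnit ε) :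
    restrictedQuadSum p (p ^ (k + 1)) (n * ((r * p ^ k + ε) ^ 2 - 1)) =
      p ^ k * (legendreSym p (2 * ε * r * n) * ∑ x : ZMod p, ZMod.stdAddChar (x ^ 2) - 1) := by
  have hpZ : Prime (p : ℤ) := Nat.prime_iff_prime_int.mp Fact.out
  have hε2 : ε ^ 2 = 1 := by rcases Int.isUnit_iff.mp hε with rfl | rfl <;> rfl
  set u : ℤ := n * (r ^ 2 * p ^ k + 2 * ε * r)
  have hmod : (u : ZMod p) = ((2 * ε * r * n : ℤ) : ZMod p) := by
    push_cast [u]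
    rw [ZMod.natCast_self, zero_pow hk]
    ring
  have hu : ¬ (p : ℤ) ∣ u := by
    rw [← ZMod.intCast_zmod_eq_zero_iff_dvd, hmod, ZMod.intCast_zmod_eq_zero_iff_dvd]
    simp only [hpZ.dvd_mul, not_or]
    have hεp : ¬ (p : ℤ) ∣ ε := fun h => hpZ.not_isUnit (isUnit_of_dvd_unit h hε)
    exact ⟨⟨⟨(Fact.out : p.Prime).not_natCast_dvd_two hp2, hεp⟩, by exact_mod_cast hr⟩, hn⟩
  have hw : n * ((r * p ^ k + ε) ^ 2 - 1) = p ^ k * u := by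
    linear_combination n * hε2
  rw [hw, restrictedQuadSum_pow_succ_pow_mul hp2 k hu, legendreSym, legendreSym, hmod]
end

/-- The modulus `q` is a variable because `ZMod q` cannot be rewritten along `q = p ^ α`:
callers choose the form of `p ^ α` (such as `p ^ β * p ^ γ`) that the next lemma expects. -/
lemma sum_exp_eq_restrictedQuadSum {p q α : ℕ} [NeZero q] (hq : q = p ^ α) (hp : p ≠ 1)
    (hα : α ≠ 0) (n c : ℤ) :
    ∑ b ∈ (Icc 1 (p ^ α)).filter (·.Coprime p),
        exp (2 * Real.pi * I * (n * b ^ 2 * (c : ℂ) / (p : ℂ) ^ α)) =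
      restrictedQuadSum p q (n * c) := by
  subst hq
  rw [filter_coprime_Icc_eq_filter_range hp (dvd_pow_self p hα), restrictedQuadSum]
  refine sum_congr rfl fun b _ => ?_
  rw [ZMod.stdAddChar_coe]
  push_cast
  ring_nf

theorem restricted_quadratic_exponential_sum_general (p : ℕ) [Fact p.Prime] (hp : 3 ≤ p)
    (α : ℕ) (hα : 2 ≤ α) (n : ℤ) (hn : IsCoprime n (p : ℤ))
    (a : ℕ) :
    (¬ (p : ℤ) ^ (α - 1) ∣ ((a : ℤ) ^ 2 - 1) →
      (∑ b ∈ (Finset.Icc 1 (p ^ α)).filter (fun b => Nat.Coprime b p),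
        Complex.exp (2 * Real.pi * Complex.I *
          (n * b ^ 2 * ((a : ℂ) ^ 2 - 1) / (p : ℂ) ^ α))) = 0) ∧
    ((p : ℤ) ^ (α - 1) ∣ ((a : ℤ) ^ 2 - 1) → ¬ (p : ℤ) ^ α ∣ ((a : ℤ) ^ 2 - 1) →
      ∀ r : ℕ, ∀ ε : ℤ, 1 ≤ r → r ≤ p - 1 → (ε = 1 ∨ ε = -1) →
        (a : ℤ) = r * (p : ℤ) ^ (α - 1) + ε →
      (∑ b ∈ (Finset.Icc 1 (p ^ α)).filter (fun b => Nat.Coprime b p),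
        Complex.exp (2 * Real.pi * Complex.I *
          (n * b ^ 2 * ((a : ℂ) ^ 2 - 1) / (p : ℂ) ^ α))) =
        (p : ℂ) ^ (α - 1) *
          ((legendreSym p (2 * ε * r * n) : ℂ) *
            (∑ b ∈ Finset.Icc 1 p,
              Complex.exp (2 * Real.pi * Complex.I * ((b : ℂ) ^ 2 / (p : ℂ)))) - 1)) ∧
    ((p : ℤ) ^ α ∣ ((a : ℤ) ^ 2 - 1) →
      (∑ b ∈ (Finset.Icc 1 (p ^ α)).filter (fun b => Nat.Coprime b p),
        Complex.exp (2 * Real.pi * Complex.I *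
          (n * b ^ 2 * ((a : ℂ) ^ 2 - 1) / (p : ℂ) ^ α))) =
        (Nat.totient (p ^ α) : ℂ)) := by
  have hpp : p.Prime := Fact.out
  have hpZ : Prime (p : ℤ) := Nat.prime_iff_prime_int.mp hpp
  have hpn : ¬ (p : ℤ) ∣ n := fun h => hpZ.not_isUnit (hn.isUnit_of_dvd' h dvd_rfl)
  have hsum (q : ℕ) [NeZero q] (hq : q = p ^ α) := sum_exp_eq_restrictedQuadSum hq hpp.ne_one
    (by omega : α ≠ 0) n ((a : ℤ) ^ 2 - 1)
  push_cast at hsum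
  refine ⟨fun hndvd => ?_, fun _ _ r ε hr1 hr2 hε ha => ?_, fun hdvd => ?_⟩
  · rw [hsum _ rfl, restrictedQuadSum_eq_zero_of_not_dvd (by omega)]
    exact fun h => hndvd ((hn.pow_right.symm).dvd_of_dvd_mul_left h)
  · have hr : ¬ p ∣ r := fun h => by have := Nat.le_of_dvd (by omega) h; omega
    rw [hsum (p ^ (α - 1 + 1)) (by rw [Nat.sub_add_cancel (by omega)]), ha,
      restrictedQuadSum_mul_sq_sub_one (by omega) (by omega) hpn hr (Int.isUnit_iff.mpr hε),
      sum_Icc_exp_sq_eq_sum_stdAddChar_sq]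
  · rw [hsum _ rfl, restrictedQuadSum_of_dvd (by omega) (hdvd.mul_left n)]

/-- evaluation of `S = Σ'_{b=1}^{p^α} e(n b² (a²-1)/p^α)` (sum over `b`
coprime to `p`) in the three cases according to the `p`-adic valuation of `a²-1`. -/
theorem restricted_quadratic_exponential_sum (p : ℕ) [Fact p.Prime] (hp : 3 ≤ p)
    (α : ℕ) (hα : 2 ≤ α) (n : ℤ) (hn : IsCoprime n (p : ℤ))
    (a : ℕ) (ha : 1 ≤ a) (ha' : a ≤ p ^ α - 1) :
    (¬ (p : ℤ) ^ (α - 1) ∣ ((a : ℤ) ^ 2 - 1) →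
      (∑ b ∈ (Finset.Icc 1 (p ^ α)).filter (fun b => Nat.Coprime b p),
        Complex.exp (2 * Real.pi * Complex.I *
          (n * b ^ 2 * ((a : ℂ) ^ 2 - 1) / (p : ℂ) ^ α))) = 0) ∧
    ((p : ℤ) ^ (α - 1) ∣ ((a : ℤ) ^ 2 - 1) → ¬ (p : ℤ) ^ α ∣ ((a : ℤ) ^ 2 - 1) →
      ∀ r : ℕ, ∀ ε : ℤ, 1 ≤ r → r ≤ p - 1 → (ε = 1 ∨ ε = -1) →
        (a : ℤ) = r * (p : ℤ) ^ (α - 1) + ε →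
      (∑ b ∈ (Finset.Icc 1 (p ^ α)).filter (fun b => Nat.Coprime b p),
        Complex.exp (2 * Real.pi * Complex.I *
          (n * b ^ 2 * ((a : ℂ) ^ 2 - 1) / (p : ℂ) ^ α))) =
        (p : ℂ) ^ (α - 1) *
          ((legendreSym p (2 * ε * r * n) : ℂ) *
            (∑ b ∈ Finset.Icc 1 p,
              Complex.exp (2 * Real.pi * Complex.I * ((b : ℂ) ^ 2 / (p : ℂ)))) - 1)) ∧
    ((p : ℤ) ^ α ∣ ((a : ℤ) ^ 2 - 1) →
      (∑ b ∈ (Finset.Icc 1 (p ^ α)).filter (fun b => Nat.Coprime b p),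
        Complex.exp (2 * Real.pi * Complex.I *
          (n * b ^ 2 * ((a : ℂ) ^ 2 - 1) / (p : ℂ) ^ α))) =
        (Nat.totient (p ^ α) : ℂ)) :=
  restricted_quadratic_exponential_sum_general p hp α hα n hn a
end

section
/- Let m, n ≥ 2 be coprime integers and u an integer with gcd(u, mn) = 1. For any Dirichlet character χ = χ₁χ₂ modulo mn, where χ₁ is a character mod m and χ₂ a character mod n, the generalized quadratic Gauss sum satisfies G(u, χ; mn) = χ₁(n)·χ₂(m)·G(un, χ₁; m)·G(um, χ₂; n). -/
/-!
By the Chinese remainder theorem every residue mod `mn` is `n x + m y` for a unique pair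
`(x mod m, y mod n)`, since `n` is a unit mod `m` and `m` a unit mod `n`. For such a residue
`χ(n x + m y) = χ₁(n x) χ₂(m y)`, and `u (n x + m y)² ≡ n (u n x²) + m (u m y²) (mod mn)` because
the cross term is a multiple of `mn`, so `e((u (n x + m y)²)/mn) = e(u n x²/m) e(u m y²/n)`.
The sum over residues mod `mn` thus becomes a double sum that factors.
-/

open Complex

/-- The generalized quadratic Gauss sum `G(n,χ;q) = Σ_{a=1}^{q} χ(a)·e(n·a²/q)`. -/
noncomputable def Ggen (n : ℤ) (q : ℕ) (χ : DirichletCharacter ℂ q) : ℂ :=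
  ∑ a ∈ Finset.Icc 1 q,
    χ (a : ZMod q) * Complex.exp (2 * Real.pi * Complex.I * (n * (a : ℂ) ^ 2 / (q : ℂ)))

namespace ZMod

theorem sum_Icc_one_natCast {M : Type*} [AddCommMonoid M] (q : ℕ) [NeZero q]
    (f : ZMod q → M) : ∑ a ∈ Finset.Icc 1 q, f a = ∑ x : ZMod q, f x := by
  -- `(x - 1).val + 1` is the representative of `x` in `[1, q]`
  refine Finset.sum_nbij' (fun a ↦ (a : ZMod q)) (fun x ↦ (x - 1).val + 1)
    (by simp) (fun x _ ↦ ?_) (fun a ha ↦ ?_) (fun x _ ↦ ?_) (fun _ _ ↦ rfl)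
  · simpa [Nat.succ_le_iff] using val_lt (x - 1)
  · obtain ⟨h1, h2⟩ := Finset.mem_Icc.mp ha
    have : (a : ZMod q) - 1 = ((a - 1 : ℕ) : ZMod q) := by rw [Nat.cast_sub h1, Nat.cast_one]
    simp only [this, val_natCast, Nat.mod_eq_of_lt (show a - 1 < q by omega)]
    omega
  · simp

theorem stdAddChar_natCast_mul_of_eq_mul {N m : ℕ} [NeZero N] [NeZero m] {k : ℕ}
    (h : N = m * k) (z : ZMod N) :
    stdAddChar ((k : ZMod N) * z) = stdAddChar (z.cast : ZMod m) := by
  obtain ⟨j, rfl⟩ := intCast_surjective z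
  have hk : (k : ℂ) ≠ 0 := Nat.cast_ne_zero.mpr (right_ne_zero_of_mul (h ▸ NeZero.ne N))
  rw [cast_intCast (Dvd.intro k h.symm), ← Int.cast_natCast, ← Int.cast_mul,
    stdAddChar_coe, stdAddChar_coe, h]
  push_cast
  congr 1
  field_simp

theorem isUnit_iff_isUnit_cast_and_isUnit_cast {m n : ℕ} (h : m.Coprime n)
    (z : ZMod (m * n)) : IsUnit z ↔ IsUnit (z.cast : ZMod m) ∧ IsUnit (z.cast : ZMod n) := by
  rw [← MulEquiv.isUnit_map (chineseRemainder h), Prod.isUnit_iff]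
  simp [chineseRemainder]

section CRT

def crtParam (m n : ℕ) (p : ZMod m × ZMod n) : ZMod (m * n) :=
  n * p.1.cast + m * p.2.cast

variable {m n : ℕ} [NeZero m] [NeZero n]

theorem cast_cast_of_mul_right (x : ZMod m) : ((x.cast : ZMod (m * n)).cast : ZMod m) = x :=
  cast_cast_zmod_of_le (Nat.le_mul_of_pos_right m (NeZero.pos n)) x

theorem cast_cast_of_mul_left (y : ZMod n) : ((y.cast : ZMod (m * n)).cast : ZMod n) = y :=
  cast_cast_zmod_of_le (Nat.le_mul_of_pos_left n (NeZero.pos m)) y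

theorem cast_crtParam_fst (p : ZMod m × ZMod n) :
    ((crtParam m n p).cast : ZMod m) = n * p.1 := by
  rw [crtParam, cast_add (dvd_mul_right m n), cast_mul (dvd_mul_right m n),
    cast_mul (dvd_mul_right m n), cast_natCast (dvd_mul_right m n),
    cast_natCast (dvd_mul_right m n), natCast_self, zero_mul, add_zero,
    cast_cast_of_mul_right]

theorem cast_crtParam_snd (p : ZMod m × ZMod n) :
    ((crtParam m n p).cast : ZMod n) = m * p.2 := by
  rw [crtParam, cast_add (dvd_mul_left n m), cast_mul (dvd_mul_left n m),
    cast_mul (dvd_mul_left n m), cast_natCast (dvd_mul_left n m),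
    cast_natCast (dvd_mul_left n m), natCast_self, zero_mul, zero_add,
    cast_cast_of_mul_left]

theorem crtParam_bijective (h : m.Coprime n) : Function.Bijective (crtParam m n) := by
  have hn : IsUnit (n : ZMod m) := (isUnit_iff_coprime n m).mpr h.symm
  have hm : IsUnit (m : ZMod n) := (isUnit_iff_coprime m n).mpr h
  refine (Fintype.bijective_iff_injective_and_card _).mpr ⟨fun p q hpq ↦ ?_, by simp [card]⟩
  refine Prod.ext (hn.mul_left_cancel ?_) (hm.mul_left_cancel ?_)
  · rw [← cast_crtParam_fst, ← cast_crtParam_fst, hpq]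
  · rw [← cast_crtParam_snd, ← cast_crtParam_snd, hpq]

theorem stdAddChar_mul_crtParam_sq (u : ℤ) (p : ZMod m × ZMod n) :
    stdAddChar ((u : ZMod (m * n)) * crtParam m n p ^ 2) =
      stdAddChar (((u * n : ℤ) : ZMod m) * p.1 ^ 2) *
        stdAddChar (((u * m : ℤ) : ZMod n) * p.2 ^ 2) := by
  set x : ZMod (m * n) := p.1.cast
  set y : ZMod (m * n) := p.2.cast
  have hmn : ((m * n : ℕ) : ZMod (m * n)) = 0 := natCast_self _
  have : (u : ZMod (m * n)) * crtParam m n p ^ 2 = n * (u * n * x ^ 2) + m * (u * m * y ^ 2) := by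
    rw [crtParam]
    push_cast at hmn
    linear_combination (2 * u * x * y) * hmn
  rw [this, AddChar.map_add_eq_mul, stdAddChar_natCast_mul_of_eq_mul rfl,
    stdAddChar_natCast_mul_of_eq_mul (mul_comm m n)]
  congr 2 <;> simp [x, y, cast_mul (dvd_mul_right m n), cast_mul (dvd_mul_left n m),
    cast_cast_of_mul_right, cast_cast_of_mul_left]

end CRT

end ZMod

theorem DirichletCharacter.changeLevel_mul_changeLevel_apply {R : Type*} [CommMonoidWithZero R]
    {m n : ℕ} (h : m.Coprime n) (χ₁ : DirichletCharacter R m) (χ₂ : DirichletCharacter R n)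
    (z : ZMod (m * n)) :
    (changeLevel (dvd_mul_right m n) χ₁ * changeLevel (dvd_mul_left n m) χ₂) z =
      χ₁ z.cast * χ₂ z.cast := by
  by_cases hz : IsUnit z
  · obtain ⟨z, rfl⟩ := hz
    rw [MulChar.mul_apply, changeLevel_eq_cast_of_dvd, changeLevel_eq_cast_of_dvd]
  · rw [MulChar.map_nonunit _ hz]
    rw [ZMod.isUnit_iff_isUnit_cast_and_isUnit_cast h, not_and_or] at hz
    rcases hz with hz | hz <;> simp [MulChar.map_nonunit _ hz]

theorem Ggen_eq_sum_stdAddChar (N : ℤ) (q : ℕ) [NeZero q] (χ : DirichletCharacter ℂ q) :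
    Ggen N q χ = ∑ x : ZMod q, χ x * ZMod.stdAddChar ((N : ZMod q) * x ^ 2) := by
  rw [Ggen, ← ZMod.sum_Icc_one_natCast]
  refine Finset.sum_congr rfl fun a _ ↦ ?_
  have : (N : ZMod q) * (a : ZMod q) ^ 2 = ((N * a ^ 2 : ℤ) : ZMod q) := by push_cast; ring
  rw [this, ZMod.stdAddChar_coe]
  push_cast
  ring_nf

theorem Ggen_mul_general (m n : ℕ) (hm : 2 ≤ m) (hn : 2 ≤ n) (hmn : Nat.Coprime m n)
    (u : ℤ)
    (χ₁ : DirichletCharacter ℂ m) (χ₂ : DirichletCharacter ℂ n)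
    (χ : DirichletCharacter ℂ (m * n))
    (hχ : χ = (DirichletCharacter.changeLevel (Dvd.intro n rfl) χ₁) *
        (DirichletCharacter.changeLevel (Dvd.intro_left m rfl) χ₂)) :
    Ggen u (m * n) χ =
      χ₁ (n : ZMod m) * χ₂ (m : ZMod n) * Ggen (u * n) m χ₁ * Ggen (u * m) n χ₂ := by
  have : NeZero m := ⟨by omega⟩
  have : NeZero n := ⟨by omega⟩
  rw [Ggen_eq_sum_stdAddChar, Ggen_eq_sum_stdAddChar, Ggen_eq_sum_stdAddChar,
    ← (ZMod.crtParam_bijective hmn).sum_comp, mul_assoc, Fintype.sum_mul_sum, Finset.mul_sum,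
    Fintype.sum_prod_type]
  refine Fintype.sum_congr _ _ fun x ↦ ?_
  rw [Finset.mul_sum]
  refine Fintype.sum_congr _ _ fun y ↦ ?_
  rw [hχ, DirichletCharacter.changeLevel_mul_changeLevel_apply hmn,
    ZMod.stdAddChar_mul_crtParam_sq, ZMod.cast_crtParam_fst, ZMod.cast_crtParam_snd,
    map_mul, map_mul]
  ring

/-- multiplicativity of the generalized quadratic Gauss sum:
for coprime `m, n ≥ 2`, `u` coprime to `mn`, and `χ = χ₁χ₂` with `χ₁` mod `m`,
`χ₂` mod `n`, we have `G(u,χ;mn) = χ₁(n)·χ₂(m)·G(un,χ₁;m)·G(um,χ₂;n)`. -/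
theorem Ggen_mul (m n : ℕ) (hm : 2 ≤ m) (hn : 2 ≤ n) (hmn : Nat.Coprime m n)
    (u : ℤ) (hu : IsCoprime u ((m : ℤ) * n))
    (χ₁ : DirichletCharacter ℂ m) (χ₂ : DirichletCharacter ℂ n)
    (χ : DirichletCharacter ℂ (m * n))
    (hχ : χ = (DirichletCharacter.changeLevel (Dvd.intro n rfl) χ₁) *
        (DirichletCharacter.changeLevel (Dvd.intro_left m rfl) χ₂)) :
    Ggen u (m * n) χ =
      χ₁ (n : ZMod m) * χ₂ (m : ZMod n) * Ggen (u * n) m χ₁ * Ggen (u * m) n χ₂ :=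
  Ggen_mul_general m n hm hn hmn u χ₁ χ₂ χ hχ
end

section
/- Let p ≥ 3 be a prime, α ≥ 2 and m ≥ 2 integers, and n an integer with gcd(n,p)=1. Then Σ_{χ mod p^α} |G(n,χ;p^α)|^{2m} = 4^{m-1} · φ(p^α)² · p^{(m-1)α}, where the sum is over all Dirichlet characters mod p^α. -/
open Complex

/-!
Expanding `|G|²` and substituting `a = c b` gives `|G|² = Σ_c χ(c) S(c)` with
`S(c) = Σ_{b unit} e(n (c² - 1) b² / q)` (`sqDiffSum`). For `q = p^α`, averaging `S(c)` over
`b ↦ b (1 + pʲ)` shows that `S(c) = 0` unless `p^(α-1) ∣ c² - 1`, i.e. unless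
`c = ±(1 + t p^(α-1))`. On these `c` both `χ` and `S` are geometric in `t`, so
`|G|² = (1 + χ(-1)) · p · N`, where `N` counts the units `b` with
`χ(1 + p^(α-1)) e(2 n b² / p) = 1`. This condition depends only on `±b mod p`, so
`N ∈ {0, 2 p^(α-1)}` and `|G|² ∈ {0, 4 p^α}`. Hence `Σ_χ |G|^(2m) = (4 p^α)^(m-1) Σ_χ |G|²`,
and `Σ_χ |G|² = φ(q)²` by orthogonality.
-/

open Finset ZMod ComplexConjugate

lemma Finset.sum_Icc_one_natCast_zmod {M : Type*} [AddCommMonoid M] (q : ℕ) [NeZero q]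
    (f : ZMod q → M) : ∑ a ∈ Icc 1 q, f a = ∑ x : ZMod q, f x := by
  refine sum_nbij' (↑) (fun x => if x = 0 then q else x.val) (by simp) ?_ ?_ ?_ (by simp)
  · intro x _
    split_ifs with h
    · simp [Nat.one_le_iff_ne_zero, NeZero.ne q]
    · simp [Nat.one_le_iff_ne_zero, h, x.val_lt.le]
  · intro a ha
    obtain ⟨ha1, haq⟩ := mem_Icc.mp ha
    rcases haq.lt_or_eq with h | rfl
    · rw [if_neg, val_natCast_of_lt h]
      rw [← ZMod.val_eq_zero, val_natCast_of_lt h]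
      omega
    · simp
  · intro x _
    split_ifs with h <;> simp [h]

lemma Fintype.sum_units_eq_sum {M R : Type*} [Monoid M] [Fintype M] [DecidableEq M]
    [AddCommMonoid R] {f : M → R} (hf : ∀ x, ¬IsUnit x → f x = 0) :
    ∑ u : Mˣ, f u = ∑ x, f x := by
  refine (sum_map univ ⟨Units.val, Units.val_injective⟩ f).symm.trans ?_
  refine Finset.sum_subset (subset_univ _) fun x _ hx => hf x fun hu => hx ?_
  exact mem_map_of_mem _ (mem_univ hu.unit)

lemma one_add_pow_of_sq_eq_zero {R : Type*} [CommRing R] {x : R} (hx : x ^ 2 = 0) (m : ℕ) :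
    (1 + x) ^ m = 1 + m * x := by
  induction m with
  | zero => simp
  | succ m ih =>
    rw [pow_succ, ih]
    push_cast
    linear_combination (m : R) * hx

lemma geom_sum_eq_ite_of_pow_eq_one {K : Type*} [Field K] [DecidableEq K] {z : K} {N : ℕ}
    (hz : z ^ N = 1) : ∑ t ∈ range N, z ^ t = if z = 1 then (N : K) else 0 := by
  split_ifs with h
  · simp [h]
  · rw [geom_sum_eq h, hz, sub_self, zero_div]

lemma Fintype.sum_eq_zero_of_map_mul_pow {G K : Type*} [Group G] [Fintype G] [Field K]
    [CharZero K] {f : G → K} {g : G} {ζ : G → K} {N : ℕ} (hN : N ≠ 0)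
    (hf : ∀ b s, f (b * g ^ s) = f b * ζ b ^ s) (hζN : ∀ b, ζ b ^ N = 1) (hζ : ∀ b, ζ b ≠ 1) :
    ∑ b, f b = 0 := by
  classical
  have key : (N : K) * ∑ b, f b = 0 := calc
    (N : K) * ∑ b, f b = ∑ s ∈ range N, ∑ b, f (b * g ^ s) := by
      rw [Finset.sum_congr rfl fun s _ => Fintype.sum_bijective (· * g ^ s)
        (Group.mulRight_bijective _) (fun b => f (b * g ^ s)) f fun _ => rfl, sum_const,
        Finset.card_range, nsmul_eq_mul]
    _ = ∑ b, f b * ∑ s ∈ range N, ζ b ^ s := by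
      simp_rw [hf, mul_sum]
      exact sum_comm
    _ = 0 := Finset.sum_eq_zero fun b _ => by
      rw [geom_sum_eq_ite_of_pow_eq_one (hζN b), if_neg (hζ b), mul_zero]
  exact (mul_eq_zero.mp key).resolve_left (Nat.cast_ne_zero.mpr hN)

lemma exists_mul_pow_ne_zero_of_isNilpotent {R : Type*} [CommRing R] {x D : R}
    (hx : IsNilpotent x) (hD : x * D ≠ 0) :
    ∃ j ≠ 0, D * x ^ j ≠ 0 ∧ x * (D * x ^ j) = 0 := by
  classical
  obtain ⟨k, hk⟩ := hx
  have hex : ∃ j, x * (D * x ^ j) = 0 := ⟨k, by rw [hk, mul_zero, mul_zero]⟩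
  have hj : Nat.find hex ≠ 0 := fun h => hD (by simpa [h] using Nat.find_spec hex)
  obtain ⟨i, hi⟩ := Nat.exists_eq_add_one_of_ne_zero hj
  refine ⟨Nat.find hex, hj, ?_, Nat.find_spec hex⟩
  rw [hi, pow_succ, ← mul_assoc, mul_comm]
  exact Nat.find_min hex (by omega)

section general
variable {q : ℕ} [NeZero q]

variable (q) in
noncomputable def sqDiffSum (n : ℤ) (c : ZMod q) : ℂ :=
  ∑ b : (ZMod q)ˣ, stdAddChar ((n : ZMod q) * (c ^ 2 - 1) * (b : ZMod q) ^ 2)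

lemma Ggen_eq_sum_units (n : ℤ) (χ : DirichletCharacter ℂ q) :
    Ggen n q χ = ∑ u : (ZMod q)ˣ, χ u * stdAddChar ((n : ZMod q) * (u : ZMod q) ^ 2) := by
  rw [Fintype.sum_units_eq_sum (f := fun x => χ x * stdAddChar ((n : ZMod q) * x ^ 2))
    fun x hx => by rw [χ.map_nonunit hx, zero_mul], Ggen, ← sum_Icc_one_natCast_zmod]
  refine sum_congr rfl fun a _ => ?_
  rw [show (n : ZMod q) * (a : ZMod q) ^ 2 = ((n * a ^ 2 : ℤ) : ZMod q) by push_cast; ring,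
    stdAddChar_coe]
  push_cast
  ring_nf

lemma normSq_Ggen (n : ℤ) (χ : DirichletCharacter ℂ q) :
    (normSq (Ggen n q χ) : ℂ) = ∑ c : ZMod q, χ c * sqDiffSum q n c := by
  have hconj (b : (ZMod q)ˣ) : conj (χ b * stdAddChar ((n : ZMod q) * (b : ZMod q) ^ 2)) =
      χ ↑b⁻¹ * stdAddChar (-((n : ZMod q) * (b : ZMod q) ^ 2)) := by
    rw [map_mul, ← AddChar.map_neg_eq_conj, starRingEnd_apply, MulChar.star_apply',
      MulChar.inv_apply, Ring.inverse_unit]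
  have hsubst (b c : (ZMod q)ˣ) :
      χ ↑(c * b) * stdAddChar ((n : ZMod q) * ((c * b : (ZMod q)ˣ) : ZMod q) ^ 2) *
          (χ ↑b⁻¹ * stdAddChar (-((n : ZMod q) * (b : ZMod q) ^ 2))) =
        χ c * stdAddChar ((n : ZMod q) * ((c : ZMod q) ^ 2 - 1) * (b : ZMod q) ^ 2) := by
    rw [mul_mul_mul_comm, ← map_mul, ← AddChar.map_add_eq_mul, ← Units.val_mul,
      mul_inv_cancel_right]
    congr 2
    push_cast
    ring
  rw [← Fintype.sum_units_eq_sum fun c hc => by rw [χ.map_nonunit hc, zero_mul]]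
  calc (normSq (Ggen n q χ) : ℂ)
      = ∑ b : (ZMod q)ˣ, ∑ a : (ZMod q)ˣ,
          χ a * stdAddChar ((n : ZMod q) * (a : ZMod q) ^ 2) *
            (χ ↑b⁻¹ * stdAddChar (-((n : ZMod q) * (b : ZMod q) ^ 2))) := by
        rw [← mul_conj, Ggen_eq_sum_units, map_sum, sum_mul_sum, sum_comm]
        simp_rw [hconj]
    _ = ∑ b : (ZMod q)ˣ, ∑ c : (ZMod q)ˣ,
          χ c * stdAddChar ((n : ZMod q) * ((c : ZMod q) ^ 2 - 1) * (b : ZMod q) ^ 2) := by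
        refine sum_congr rfl fun b _ => ?_
        simp_rw [← hsubst b]
        exact (Fintype.sum_bijective (· * b) (Group.mulRight_bijective b) _ _ fun c => rfl).symm
    _ = ∑ c : (ZMod q)ˣ, χ c * sqDiffSum q n c := by
        simp_rw [sqDiffSum, mul_sum]
        exact sum_comm

lemma sum_normSq_Ggen (n : ℤ) :
    ∑ χ : DirichletCharacter ℂ q, (normSq (Ggen n q χ) : ℂ) = (q.totient : ℂ) ^ 2 := by
  simp_rw [normSq_Ggen]
  rw [sum_comm]
  simp_rw [← Finset.sum_mul, DirichletCharacter.sum_characters_eq, ite_mul, zero_mul]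
  rw [sum_ite_eq', if_pos (mem_univ _), sqDiffSum]
  simp [sq, card_units_eq_totient]

lemma sqDiffSum_neg (n : ℤ) (c : ZMod q) : sqDiffSum q n (-c) = sqDiffSum q n c := by
  simp only [sqDiffSum, neg_sq]

end general

lemma sum_units_stdAddChar_mul_sq_eq_zero {N p : ℕ} [NeZero N] (hp : IsNilpotent (p : ZMod N))
    (h2 : IsUnit (2 : ZMod N)) {D : ZMod N} (hD : (p : ZMod N) * D ≠ 0) :
    ∑ b : (ZMod N)ˣ, stdAddChar (D * (b : ZMod N) ^ 2) = 0 := by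
  obtain ⟨j, hj, he, hpe⟩ := exists_mul_pow_ne_zero_of_isNilpotent hp hD
  set e := D * (p : ZMod N) ^ j
  -- `e pʲ = 0` gives `D (1 + pʲ)ᵐ = D + m e`: the substitution `b ↦ b (1 + pʲ)` multiplies
  -- the term of `b` by the nontrivial `p`-th root of unity `stdAddChar (2 e b²)`.
  have hpow (m : ℕ) : D * (1 + (p : ZMod N) ^ j) ^ m = D + m * e := by
    have hep : e * (p : ZMod N) ^ j = 0 := by
      obtain ⟨i, rfl⟩ := Nat.exists_eq_add_one_of_ne_zero hj
      rw [pow_succ', ← mul_assoc, mul_comm e, hpe, zero_mul]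
    induction m with
    | zero => simp
    | succ m ih =>
      rw [pow_succ, ← mul_assoc, ih]
      push_cast
      linear_combination (m : ZMod N) * hep
  have hw : IsUnit (1 + (p : ZMod N) ^ j) := by
    rw [add_comm]
    exact (hp.pow_of_pos hj).isUnit_add_one
  have hp0 : p ≠ 0 := by rintro rfl; simp at hD
  refine Fintype.sum_eq_zero_of_map_mul_pow (g := hw.unit)
    (ζ := fun b => stdAddChar (2 * e * (b : ZMod N) ^ 2)) hp0 (fun b s => ?_) (fun b => ?_)
    (fun b => ?_)
  · rw [Units.val_mul, Units.val_pow_eq_pow_val, IsUnit.unit_spec, mul_pow, ← pow_mul,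
      ← mul_assoc, mul_comm D, mul_assoc, hpow, ← AddChar.map_nsmul_eq_pow,
      ← AddChar.map_add_eq_mul]
    congr 1
    push_cast
    ring
  · rw [← AddChar.map_nsmul_eq_pow, nsmul_eq_mul, ← mul_assoc, mul_left_comm, hpe, mul_zero,
      zero_mul, AddChar.map_zero_eq_one]
  · rw [← AddChar.map_zero_eq_one (stdAddChar (N := N)), Ne, injective_stdAddChar.eq_iff,
      mul_right_comm]
    exact fun h => he ((h2.mul (b.isUnit.pow 2)).mul_right_eq_zero.mp h)

section primePower
variable {p α : ℕ}

local notation "ϖ" => ((p : ZMod (p ^ α)) ^ (α - 1))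

lemma natCast_mul_pow_pred (hα : α ≠ 0) : (p : ZMod (p ^ α)) * ϖ = 0 := by
  rw [← pow_succ', Nat.sub_add_cancel (Nat.pos_of_ne_zero hα), ← Nat.cast_pow, natCast_self]

lemma pow_pred_sq (hα : 2 ≤ α) : ϖ ^ 2 = 0 := by
  rw [← pow_mul, ← Nat.cast_pow, natCast_eq_zero_iff]
  exact pow_dvd_pow p (by omega)

lemma castHom_pow_pred (hα : 2 ≤ α) : castHom (dvd_pow_self p (by omega)) (ZMod p) ϖ = 0 := by
  rw [map_pow, map_natCast, natCast_self, zero_pow (by omega)]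

variable [hp : Fact p.Prime]

lemma castHom_pow_eq_zero_iff (hα : α ≠ 0) (y : ZMod (p ^ α)) :
    castHom (dvd_pow_self p hα) (ZMod p) y = 0 ↔ p ∣ y.val := by
  conv_lhs => rw [← natCast_zmod_val y]
  rw [map_natCast, natCast_eq_zero_iff]

lemma isUnit_iff_castHom_pow_ne_zero (hα : α ≠ 0) (y : ZMod (p ^ α)) :
    IsUnit y ↔ castHom (dvd_pow_self p hα) (ZMod p) y ≠ 0 := by
  rw [Ne, castHom_pow_eq_zero_iff hα,
    ← isUnit_natCast_iff_not_dvd_pow hp.out (Nat.pos_of_ne_zero hα), natCast_zmod_val]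

lemma isUnit_two_zmod_pow (hp2 : p ≠ 2) (hα : α ≠ 0) : IsUnit (2 : ZMod (p ^ α)) := by
  rw [← Nat.cast_ofNat, isUnit_natCast_iff_not_dvd_pow hp.out (Nat.pos_of_ne_zero hα),
    Nat.prime_dvd_prime_iff_eq hp.out Nat.prime_two]
  exact hp2

lemma pow_pred_mul_eq_zero_iff (hα : α ≠ 0) (y : ZMod (p ^ α)) :
    ϖ * y = 0 ↔ castHom (dvd_pow_self p hα) (ZMod p) y = 0 := by
  rw [castHom_pow_eq_zero_iff hα, ← natCast_zmod_val y, ← Nat.cast_pow, ← Nat.cast_mul,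
    natCast_eq_zero_iff, val_natCast_of_lt y.val_lt]
  generalize y.val = k
  rw [← pow_sub_one_mul hα, Nat.mul_dvd_mul_iff_left (pow_pos hp.out.pos _)]

lemma exists_eq_mul_pow_pred_of_mul_eq_zero (hα : α ≠ 0) {y : ZMod (p ^ α)}
    (hy : (p : ZMod (p ^ α)) * y = 0) : ∃ t < p, y = t * ϖ := by
  rw [← natCast_zmod_val y, ← Nat.cast_mul, natCast_eq_zero_iff] at hy
  have hpα : p * p ^ (α - 1) = p ^ α := by rw [mul_comm, pow_sub_one_mul hα]
  obtain ⟨t, ht⟩ := (Nat.mul_dvd_mul_iff_left hp.out.pos).mp ((dvd_of_eq hpα).trans hy)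
  refine ⟨t, ?_, ?_⟩
  · have := y.val_lt
    rw [ht, ← pow_sub_one_mul hα] at this
    exact Nat.lt_of_mul_lt_mul_left this
  · rw [← natCast_zmod_val y, ht]
    push_cast
    ring

lemma mul_sub_one_eq_zero_or_mul_add_one_eq_zero (hp2 : p ≠ 2) (hα : α ≠ 0) {c : ZMod (p ^ α)}
    (hc : (p : ZMod (p ^ α)) * (c ^ 2 - 1) = 0) :
    (p : ZMod (p ^ α)) * (c - 1) = 0 ∨ (p : ZMod (p ^ α)) * (c + 1) = 0 := by
  set π := castHom (dvd_pow_self p hα) (ZMod p)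
  -- `c - 1` and `c + 1` differ by the unit `2`, so one of them is a unit.
  by_cases h : π (c + 1) = 0
  · right
    have hu : IsUnit (c - 1) := by
      rw [isUnit_iff_castHom_pow_ne_zero hα, show c - 1 = c + 1 - 2 by ring, map_sub, h,
        map_ofNat, zero_sub, neg_ne_zero]
      exact Ring.two_ne_zero (by rwa [ringChar_zmod_n])
    rwa [show (p : ZMod (p ^ α)) * (c ^ 2 - 1) = (c - 1) * (p * (c + 1)) by ring,
      hu.mul_right_eq_zero] at hc
  · left
    rwa [show (p : ZMod (p ^ α)) * (c ^ 2 - 1) = (c + 1) * (p * (c - 1)) by ring,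
      ((isUnit_iff_castHom_pow_ne_zero hα _).mpr h).mul_right_eq_zero] at hc

lemma exists_eq_one_add_or_eq_neg_one_add (hp2 : p ≠ 2) (hα : α ≠ 0) {c : ZMod (p ^ α)}
    (hc : (p : ZMod (p ^ α)) * (c ^ 2 - 1) = 0) :
    ∃ t < p, c = 1 + t * ϖ ∨ c = -(1 + t * ϖ) := by
  rcases mul_sub_one_eq_zero_or_mul_add_one_eq_zero hp2 hα hc with h | h
  · obtain ⟨t, ht, he⟩ := exists_eq_mul_pow_pred_of_mul_eq_zero hα h
    exact ⟨t, ht, Or.inl (by rw [← he]; ring)⟩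
  · have h' : (p : ZMod (p ^ α)) * (-c - 1) = 0 := by linear_combination -h
    obtain ⟨t, ht, he⟩ := exists_eq_mul_pow_pred_of_mul_eq_zero hα h'
    exact ⟨t, ht, Or.inr (by rw [← he]; ring)⟩

lemma castHom_neg_one_ne_one (hp2 : p ≠ 2) (hα : α ≠ 0) :
    castHom (dvd_pow_self p hα) (ZMod p) (-1) ≠ 1 := by
  rw [map_neg, map_one]
  exact Ring.neg_one_ne_one_of_char_ne_two (by rwa [ringChar_zmod_n])

lemma injOn_mul_one_add_mul_pow_pred (hp2 : p ≠ 2) (hα : 2 ≤ α) :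
    Set.InjOn (fun ts : ℕ × ZMod (p ^ α) => ts.2 * (1 + ts.1 * ϖ))
      ↑(range p ×ˢ ({1, -1} : Finset (ZMod (p ^ α)))) := by
  have hα0 : α ≠ 0 := by omega
  set π := castHom (dvd_pow_self p hα0) (ZMod p)
  have hπ : π (-1) ≠ π 1 := map_one π ▸ castHom_neg_one_ne_one hp2 hα0
  rintro ⟨t, s⟩ hts ⟨t', s'⟩ hts' h
  simp only [mem_coe, mem_product, mem_range, mem_insert, mem_singleton] at hts hts'
  have hs : s = s' := by
    have := congrArg π h
    rw [map_mul, map_mul, map_add, map_add, map_mul, map_mul, castHom_pow_pred hα] at this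
    simp only [map_one, mul_zero, add_zero, mul_one] at this
    rcases hts.2 with rfl | rfl <;> rcases hts'.2 with rfl | rfl
    exacts [rfl, absurd this.symm hπ, absurd this hπ, rfl]
  subst hs
  have hsu : IsUnit s := by rcases hts.2 with rfl | rfl <;> simp
  have h' : ϖ * ((t : ZMod (p ^ α)) - t') = 0 := by
    linear_combination hsu.mul_left_cancel h
  rw [pow_pred_mul_eq_zero_iff hα0, map_sub, map_natCast, map_natCast, sub_eq_zero,
    natCast_eq_natCast_iff', Nat.mod_eq_of_lt hts.1, Nat.mod_eq_of_lt hts'.1] at h'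
  rw [h']

lemma sum_eq_sum_range_add_neg (hp2 : p ≠ 2) (hα : 2 ≤ α) {M : Type*} [AddCommMonoid M]
    {f : ZMod (p ^ α) → M} (hf : ∀ c, (p : ZMod (p ^ α)) * (c ^ 2 - 1) ≠ 0 → f c = 0) :
    ∑ c, f c = ∑ t ∈ range p, (f (1 + t * ϖ) + f (-(1 + t * ϖ))) := by
  set S := range p ×ˢ ({1, -1} : Finset (ZMod (p ^ α)))
  set Φ := fun ts : ℕ × ZMod (p ^ α) => ts.2 * (1 + ts.1 * ϖ)
  have hsupp (c : ZMod (p ^ α)) (hc : c ∉ S.image Φ) : f c = 0 := by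
    refine hf c fun h0 => hc ?_
    obtain ⟨t, ht, rfl | rfl⟩ := exists_eq_one_add_or_eq_neg_one_add hp2 (by omega) h0
    · exact mem_image.mpr ⟨(t, 1), mem_product.mpr ⟨mem_range.mpr ht, by simp⟩, one_mul _⟩
    · exact mem_image.mpr ⟨(t, -1), mem_product.mpr ⟨mem_range.mpr ht, by simp⟩, neg_one_mul _⟩
  have hne : (1 : ZMod (p ^ α)) ≠ -1 := fun h =>
    castHom_neg_one_ne_one hp2 (by omega : α ≠ 0) (by rw [← h, map_one])
  rw [← sum_subset (subset_univ _) fun c _ hc => hsupp c hc,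
    sum_image (injOn_mul_one_add_mul_pow_pred hp2 hα), sum_product]
  refine sum_congr rfl fun t _ => ?_
  rw [sum_pair hne]
  exact congrArg₂ (· + ·) (congrArg f (one_mul _)) (congrArg f (neg_one_mul _))

lemma card_filter_unitsMap_eq (hα : α ≠ 0) (r : (ZMod p)ˣ) :
    #{b : (ZMod (p ^ α))ˣ | unitsMap (dvd_pow_self p hα) b = r} = p ^ (α - 1) := by
  set μ := unitsMap (dvd_pow_self p hα)
  have hsurj : Function.Surjective μ := unitsMap_surjective _
  have hker : #{b | μ b = 1} = Nat.card μ.ker := by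
    rw [← Fintype.card_subtype, ← Nat.card_eq_fintype_card]
    rfl
  have hcard := μ.ker.card_mul_index
  rw [Subgroup.index_ker, MonoidHom.range_eq_top_of_surjective μ hsurj, Subgroup.card_top,
    Nat.card_eq_fintype_card (α := (ZMod p)ˣ), Nat.card_eq_fintype_card (α := (ZMod (p ^ α))ˣ),
    card_units_eq_totient, card_units_eq_totient,
    Nat.totient_prime_pow hp.out (Nat.pos_of_ne_zero hα), Nat.totient_prime hp.out] at hcard
  rw [MonoidHom.card_fiber_eq_of_mem_range μ (hsurj r) (hsurj 1), hker]
  exact Nat.eq_of_mul_eq_mul_right (by have := hp.out.two_le; omega) hcard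

lemma mul_stdAddChar_eq_one_iff (hα : α ≠ 0) {a : ZMod (p ^ α)} (ha : IsUnit a) {ω : ℂ}
    {b₀ : (ZMod (p ^ α))ˣ} (hb₀ : ω * stdAddChar (ϖ * (a * (b₀ : ZMod (p ^ α)) ^ 2)) = 1)
    (b : (ZMod (p ^ α))ˣ) :
    ω * stdAddChar (ϖ * (a * (b : ZMod (p ^ α)) ^ 2)) = 1 ↔
      unitsMap (dvd_pow_self p hα) b = unitsMap (dvd_pow_self p hα) b₀ ∨
        unitsMap (dvd_pow_self p hα) b = -unitsMap (dvd_pow_self p hα) b₀ := by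
  set π := castHom (dvd_pow_self p hα) (ZMod p)
  calc ω * stdAddChar (ϖ * (a * (b : ZMod (p ^ α)) ^ 2)) = 1
      ↔ stdAddChar (ϖ * (a * (b : ZMod (p ^ α)) ^ 2)) =
          stdAddChar (ϖ * (a * (b₀ : ZMod (p ^ α)) ^ 2)) := by
        rw [← hb₀, mul_right_inj' (left_ne_zero_of_mul_eq_one hb₀)]
    _ ↔ ϖ * (a * ((b : ZMod (p ^ α)) ^ 2 - (b₀ : ZMod (p ^ α)) ^ 2)) = 0 := by
        rw [injective_stdAddChar.eq_iff, mul_sub, mul_sub, sub_eq_zero]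
    _ ↔ π b ^ 2 = π b₀ ^ 2 := by
        rw [pow_pred_mul_eq_zero_iff hα, map_mul, (ha.map π).mul_right_eq_zero, map_sub,
          map_pow, map_pow, sub_eq_zero]
    _ ↔ π b = π b₀ ∨ π b = -π b₀ := sq_eq_sq_iff_eq_or_eq_neg
    _ ↔ _ := by simp only [Units.ext_iff, Units.val_neg, π, unitsMap_val, castHom_apply]

lemma card_filter_mul_stdAddChar_eq_one (hp2 : p ≠ 2) (hα : α ≠ 0) {a : ZMod (p ^ α)}
    (ha : IsUnit a) (ω : ℂ) :
    #{b : (ZMod (p ^ α))ˣ | ω * stdAddChar (ϖ * (a * (b : ZMod (p ^ α)) ^ 2)) = 1} = 0 ∨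
      #{b : (ZMod (p ^ α))ˣ | ω * stdAddChar (ϖ * (a * (b : ZMod (p ^ α)) ^ 2)) = 1} =
        2 * p ^ (α - 1) := by
  set μ := unitsMap (dvd_pow_self p hα)
  rcases eq_empty_or_nonempty
    {b : (ZMod (p ^ α))ˣ | ω * stdAddChar (ϖ * (a * (b : ZMod (p ^ α)) ^ 2)) = 1} with
    h | ⟨b₀, hb₀⟩
  · exact Or.inl (by rw [h, card_empty])
  right
  have hdisj : Disjoint (α := Finset _) {b | μ b = μ b₀} {b | μ b = -μ b₀} := by
    rw [disjoint_filter]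
    intro b _ h1 h2
    refine (μ b₀).ne_zero ?_
    rw [h1, Units.ext_iff, Units.val_neg] at h2
    exact (Ring.eq_self_iff_eq_zero_of_char_ne_two (by rwa [ringChar_zmod_n])).mp h2.symm
  rw [filter_congr fun b _ => mul_stdAddChar_eq_one_iff hα ha ((mem_filter_univ b₀).mp hb₀) b,
    filter_or, card_union_of_disjoint hdisj, card_filter_unitsMap_eq hα,
    card_filter_unitsMap_eq hα, two_mul]

lemma sqDiffSum_one_add_mul_pow_pred (hα : 2 ≤ α) (n : ℤ) (t : ℕ) :
    sqDiffSum (p ^ α) n (1 + t * ϖ) = ∑ b : (ZMod (p ^ α))ˣ,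
      stdAddChar (ϖ * (2 * (n : ZMod (p ^ α)) * (b : ZMod (p ^ α)) ^ 2)) ^ t := by
  refine sum_congr rfl fun b _ => ?_
  rw [← AddChar.map_nsmul_eq_pow, nsmul_eq_mul]
  congr 1
  linear_combination ((n : ZMod (p ^ α)) * t ^ 2 * (b : ZMod (p ^ α)) ^ 2) * pow_pred_sq hα

lemma normSq_Ggen_prime_pow (hp2 : p ≠ 2) (hα : 2 ≤ α) {n : ℤ} (hn : IsUnit (n : ZMod (p ^ α)))
    (χ : DirichletCharacter ℂ (p ^ α)) :
    (normSq (Ggen n (p ^ α) χ) : ℂ) = (1 + χ (-1)) * p * #{b : (ZMod (p ^ α))ˣ |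
      χ (1 + ϖ) * stdAddChar (ϖ * (2 * (n : ZMod (p ^ α)) * (b : ZMod (p ^ α)) ^ 2)) = 1} := by
  have hα0 : α ≠ 0 := by omega
  set ω := χ (1 + ϖ)
  set z : (ZMod (p ^ α))ˣ → ℂ :=
    fun b => stdAddChar (ϖ * (2 * (n : ZMod (p ^ α)) * (b : ZMod (p ^ α)) ^ 2))
  have hvanish (c : ZMod (p ^ α)) (hc : (p : ZMod (p ^ α)) * (c ^ 2 - 1) ≠ 0) :
      χ c * sqDiffSum (p ^ α) n c = 0 := by
    rw [sqDiffSum, sum_units_stdAddChar_mul_sq_eq_zero ⟨α, by rw [← Nat.cast_pow, natCast_self]⟩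
      (isUnit_two_zmod_pow hp2 hα0) (by rwa [mul_left_comm, Ne, hn.mul_right_eq_zero]),
      mul_zero]
  have hterm (t : ℕ) : χ (1 + t * ϖ) * sqDiffSum (p ^ α) n (1 + t * ϖ) +
      χ (-(1 + t * ϖ)) * sqDiffSum (p ^ α) n (-(1 + t * ϖ)) =
        (1 + χ (-1)) * ∑ b, (ω * z b) ^ t := by
    have hχ : χ (1 + t * ϖ) = ω ^ t := by
      rw [← map_pow, one_add_pow_of_sq_eq_zero (pow_pred_sq hα)]
    rw [sqDiffSum_neg, neg_eq_neg_one_mul (1 + _), map_mul, hχ, sqDiffSum_one_add_mul_pow_pred hα]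
    simp_rw [mul_pow, ← mul_sum]
    ring
  have hroot (b : (ZMod (p ^ α))ˣ) : (ω * z b) ^ p = 1 := by
    rw [mul_pow, ← map_pow, one_add_pow_of_sq_eq_zero (pow_pred_sq hα), natCast_mul_pow_pred hα0,
      add_zero, map_one, one_mul, ← AddChar.map_nsmul_eq_pow, nsmul_eq_mul, ← mul_assoc,
      natCast_mul_pow_pred hα0, zero_mul, AddChar.map_zero_eq_one]
  rw [normSq_Ggen, sum_eq_sum_range_add_neg hp2 hα hvanish, sum_congr rfl fun t _ => hterm t,
    ← mul_sum, sum_comm]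
  simp_rw [geom_sum_eq_ite_of_pow_eq_one (hroot _)]
  rw [sum_ite, sum_const_zero, add_zero, sum_const, nsmul_eq_mul]
  ring

lemma normSq_Ggen_prime_pow_eq_zero_or (hp2 : p ≠ 2) (hα : 2 ≤ α) {n : ℤ}
    (hn : IsUnit (n : ZMod (p ^ α))) (χ : DirichletCharacter ℂ (p ^ α)) :
    normSq (Ggen n (p ^ α) χ) = 0 ∨ normSq (Ggen n (p ^ α) χ) = 4 * p ^ α := by
  have hα0 : α ≠ 0 := by omega
  have hG := normSq_Ggen_prime_pow hp2 hα hn χ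
  rcases card_filter_mul_stdAddChar_eq_one hp2 hα0 ((isUnit_two_zmod_pow hp2 hα0).mul hn)
    (χ (1 + ϖ)) with h | h <;> rw [h] at hG
  · left
    rw [Nat.cast_zero, mul_zero] at hG
    exact_mod_cast hG
  rcases χ.even_or_odd with hχ | hχ <;> rw [hχ] at hG
  · right
    have h4 : (1 + 1) * (p : ℂ) * ((2 * p ^ (α - 1) : ℕ) : ℂ) = ((4 * p ^ α : ℝ) : ℂ) := by
      push_cast
      rw [← mul_pow_sub_one hα0 (p : ℂ)]
      ring
    exact_mod_cast hG.trans h4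
  · left
    rw [add_neg_cancel, zero_mul, zero_mul] at hG
    exact_mod_cast hG

end primePower

/-- for an odd prime `p`, `α ≥ 2`, `m ≥ 2`, and `n` coprime to `p`,
`Σ_{χ mod p^α} |G(n,χ;p^α)|^{2m} = 4^{m-1}·φ(p^α)²·p^{(m-1)α}`. -/
theorem sum_Ggen_pow_prime_power (p : ℕ) [Fact p.Prime] (hp : 3 ≤ p)
    (α : ℕ) (hα : 2 ≤ α) (m : ℕ) (hm : 2 ≤ m) (n : ℤ) (hn : IsCoprime n (p : ℤ)) :
    (∑ χ : DirichletCharacter ℂ (p ^ α), ‖Ggen n (p ^ α) χ‖ ^ (2 * m)) =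
      4 ^ (m - 1) * (Nat.totient (p ^ α) : ℝ) ^ 2 * (p : ℝ) ^ ((m - 1) * α) := by
  have hn' : IsUnit (n : ZMod (p ^ α)) := by
    rw [coe_int_isUnit_iff_isCoprime, Nat.cast_pow]
    exact hn.symm.pow_left
  have hterm (χ : DirichletCharacter ℂ (p ^ α)) :
      ‖Ggen n (p ^ α) χ‖ ^ (2 * m) = (4 * p ^ α) ^ (m - 1) * normSq (Ggen n (p ^ α) χ) := by
    rw [pow_mul, Complex.sq_norm]
    rcases normSq_Ggen_prime_pow_eq_zero_or (by omega) hα hn' χ with h | h <;> rw [h]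
    · rw [zero_pow (by omega), mul_zero]
    · rw [← pow_succ, Nat.sub_add_cancel (by omega)]
  have hsum : ∑ χ : DirichletCharacter ℂ (p ^ α), normSq (Ggen n (p ^ α) χ) =
      (Nat.totient (p ^ α) : ℝ) ^ 2 := by
    exact_mod_cast sum_normSq_Ggen (q := p ^ α) n
  rw [sum_congr rfl fun χ _ => hterm χ, ← mul_sum, hsum, mul_pow, ← pow_mul, mul_comm α]
  ring
end

section
/- Let p ≥ 3 be a prime, n coprime to p, and k ≥ 1. Then the sum over tuples (r₁,…,r_k) with rᵢ ∈ {1,…,p-1} and r₁+⋯+r_k ≡ 0 (mod p) of the product Π_{i=1}^{k} (((2n·rᵢ)/p)·G(1;p) − 1) equals ((p+1)(1-p)^k + (p-1)(p+1)^k)/(2p). -/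
open Complex

open Finset


private lemma addChar_map_sum {A : Type*} [AddCommMonoid A] {ι : Type*}
    (ψ : AddChar A ℂ) (s : Finset ι) (f : ι → A) :
    ψ (∑ i ∈ s, f i) = ∏ i ∈ s, ψ (f i) := by
  induction s using Finset.cons_induction with
  | empty => simp
  | cons a s ha ih => rw [Finset.sum_cons, Finset.prod_cons, AddChar.map_add_eq_mul, ih]

private lemma stdAddChar_ne_one (p : ℕ) [Fact p.Prime] :
    (ZMod.stdAddChar : AddChar (ZMod p) ℂ) ≠ 1 := by
  haveI : NeZero p := ⟨(Fact.out : p.Prime).ne_zero⟩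
  have h := ZMod.isPrimitive_stdAddChar p (a := 1) one_ne_zero
  rwa [AddChar.mulShift_one] at h

private lemma sq_sum_eq_gaussSum (p : ℕ) [Fact p.Prime] (hp2 : p ≠ 2) :
    ∑ x : ZMod p, ZMod.stdAddChar (x ^ 2)
      = gaussSum ((quadraticChar (ZMod p)).ringHomComp (Int.castRingHom ℂ)) ZMod.stdAddChar := by
  have hchar2 : ringChar (ZMod p) ≠ 2 := by rw [ZMod.ringChar_zmod_n]; exact hp2
  rw [← Fintype.sum_fiberwise (fun x : ZMod p => x ^ 2)
    (fun x : ZMod p => ZMod.stdAddChar (x ^ 2))]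
  have inner : ∀ a : ZMod p,
      (∑ x : {x : ZMod p // x ^ 2 = a}, ZMod.stdAddChar ((x : ZMod p) ^ 2))
        = (((quadraticChar (ZMod p) a : ℤ) : ℂ) + 1) * ZMod.stdAddChar a := by
    intro a
    have h1 : ∀ x : {x : ZMod p // x ^ 2 = a},
        ZMod.stdAddChar ((x : ZMod p) ^ 2) = ZMod.stdAddChar a := by
      rintro ⟨x, hx⟩; rw [hx]
    rw [Finset.sum_congr rfl (fun x _ => h1 x), Finset.sum_const, Finset.card_univ,
      nsmul_eq_mul]
    congr 1
    have hcard : (Fintype.card {x : ZMod p // x ^ 2 = a} : ℤ)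
        = quadraticChar (ZMod p) a + 1 := by
      rw [← quadraticChar_card_sqrts hchar2 a, Set.toFinset_card]
      congr 1
    have h2 := congrArg (fun z : ℤ => (z : ℂ)) hcard
    push_cast at h2 ⊢
    exact h2
  rw [Finset.sum_congr rfl (fun a _ => inner a)]
  simp_rw [add_mul, one_mul]
  rw [Finset.sum_add_distrib, AddChar.sum_eq_zero_of_ne_one (stdAddChar_ne_one p), add_zero,
    gaussSum]
  exact Finset.sum_congr rfl (fun a _ => by simp [MulChar.ringHomComp_apply])

private lemma icc_sum_eq (p : ℕ) [Fact p.Prime] :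
    (∑ b ∈ Finset.Icc 1 p,
        Complex.exp (2 * Real.pi * Complex.I * ((b : ℂ) ^ 2 / (p : ℂ))))
      = ∑ x : ZMod p, ZMod.stdAddChar (x ^ 2) := by
  haveI : NeZero p := ⟨(Fact.out : p.Prime).ne_zero⟩
  have hp1 : 1 ≤ p := (Fact.out : p.Prime).one_lt.le
  have key : ∀ b : ℕ, Complex.exp (2 * Real.pi * Complex.I * ((b : ℂ) ^ 2 / (p : ℂ)))
      = ZMod.stdAddChar (((b : ZMod p)) ^ 2) := by
    intro b
    have h : ((b : ZMod p)) ^ 2 = (((b ^ 2 : ℕ) : ℤ) : ZMod p) := by push_cast; ring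
    rw [h, ZMod.stdAddChar_coe]
    congr 1
    push_cast
    ring
  refine Finset.sum_bij' (fun (b : ℕ) (_ : b ∈ Finset.Icc 1 p) => ((b : ZMod p)))
    (fun (x : ZMod p) (_ : x ∈ Finset.univ) => if x = 0 then p else x.val)
    (fun a ha => Finset.mem_univ _) ?_ ?_ ?_ ?_
  · intro x _
    by_cases hx : x = 0
    · simp [hx, hp1]
    · simp only [hx, if_false, Finset.mem_Icc]
      exact ⟨Nat.one_le_iff_ne_zero.mpr (fun h => hx ((ZMod.val_eq_zero x).mp h)),
        (ZMod.val_lt x).le⟩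
  · intro a ha
    rw [Finset.mem_Icc] at ha
    by_cases h0 : (a : ZMod p) = 0
    · have : p ∣ a := (ZMod.natCast_eq_zero_iff a p).mp h0
      have : a = p := le_antisymm ha.2 (Nat.le_of_dvd (by omega) this)
      simp [h0, this]
    · simp only [h0, if_false]
      have halt : a < p := by
        rcases Nat.lt_or_ge a p with h | h
        · exact h
        · exfalso; have : a = p := le_antisymm ha.2 h
          rw [this, ZMod.natCast_self] at h0; exact h0 rfl
      rw [ZMod.val_cast_of_lt halt]
  · intro x _
    by_cases hx : x = 0
    · simp [hx]
    · simp only [hx, if_false]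
      rw [ZMod.natCast_val, ZMod.cast_id]
  · intro a _
    exact key a

private lemma sum_tuples_eq (p : ℕ) [Fact p.Prime] (f : ZMod p → ℂ) (k : ℕ) :
    (∑ r ∈ Finset.univ.filter
        (fun r : Fin k → ZMod p => (∀ i, r i ≠ 0) ∧ ∑ i, r i = 0),
      ∏ i, f (r i))
    = (p : ℂ)⁻¹ * ∑ t : ZMod p,
        (∑ x ∈ Finset.univ.erase (0 : ZMod p), f x * ZMod.stdAddChar (t * x)) ^ k := by
  classical
  haveI : NeZero p := ⟨(Fact.out : p.Prime).ne_zero⟩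
  have hpz : (p : ℂ) ≠ 0 := Nat.cast_ne_zero.mpr (Fact.out : p.Prime).ne_zero
  set ψ : AddChar (ZMod p) ℂ := ZMod.stdAddChar with hψdef
  have hψprim : ψ.IsPrimitive := ZMod.isPrimitive_stdAddChar p
  have hcard : (Fintype.card (ZMod p) : ℂ) = p := by rw [ZMod.card]
  have hdetect : ∀ b : ZMod p,
      (if b = 0 then (1 : ℂ) else 0) = (p : ℂ)⁻¹ * ∑ t : ZMod p, ψ (t * b) := by
    intro b
    rw [AddChar.sum_mulShift b hψprim]
    split_ifs with h
    · rw [hcard]; field_simp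
    · simp
  calc
    (∑ r ∈ Finset.univ.filter
        (fun r : Fin k → ZMod p => (∀ i, r i ≠ 0) ∧ ∑ i, r i = 0),
      ∏ i, f (r i))
      = ∑ r ∈ Finset.univ.filter (fun r : Fin k → ZMod p => ∀ i, r i ≠ 0),
          (if (∑ i, r i) = 0 then (1 : ℂ) else 0) * ∏ i, f (r i) := by
        rw [Finset.sum_filter, Finset.sum_filter]
        refine Finset.sum_congr rfl fun r _ => ?_
        by_cases h1 : ∀ i, r i ≠ 0 <;> by_cases h2 : (∑ i, r i) = 0 <;>
          simp [h1, h2]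
    _ = (p : ℂ)⁻¹ * ∑ r ∈ Finset.univ.filter (fun r : Fin k → ZMod p => ∀ i, r i ≠ 0),
          ∑ t : ZMod p, ∏ i, (f (r i) * ψ (t * r i)) := by
        rw [Finset.mul_sum]
        refine Finset.sum_congr rfl fun r _ => ?_
        rw [hdetect (∑ i, r i), mul_assoc]
        congr 1
        rw [Finset.sum_mul]
        refine Finset.sum_congr rfl fun t _ => ?_
        rw [Finset.mul_sum] ; rw [addChar_map_sum]
        rw [← Finset.prod_mul_distrib]
        exact Finset.prod_congr rfl fun i _ => mul_comm _ _
    _ = (p : ℂ)⁻¹ * ∑ t : ZMod p,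
          ∑ r ∈ Fintype.piFinset (fun _ : Fin k => Finset.univ.erase (0 : ZMod p)),
            ∏ i, (f (r i) * ψ (t * r i)) := by
        congr 1
        rw [Finset.sum_comm]
        refine Finset.sum_congr rfl fun t _ => Finset.sum_congr ?_ (fun _ _ => rfl)
        ext r
        simp [Fintype.mem_piFinset]
    _ = (p : ℂ)⁻¹ * ∑ t : ZMod p,
        (∑ x ∈ Finset.univ.erase (0 : ZMod p), f x * ψ (t * x)) ^ k := by
        congr 1
        refine Finset.sum_congr rfl fun t _ => ?_
        rw [← Finset.prod_univ_sum (fun _ : Fin k => Finset.univ.erase (0 : ZMod p))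
          (fun _ x => f x * ψ (t * x))]
        rw [Finset.prod_const, Finset.card_univ, Fintype.card_fin]

section eval
variable (p : ℕ) [Fact p.Prime]

private lemma chi_sq_one (hp2 : p ≠ 2) {a : ZMod p} (ha : a ≠ 0) :
    ((quadraticChar (ZMod p)).ringHomComp (Int.castRingHom ℂ)) a *
      ((quadraticChar (ZMod p)).ringHomComp (Int.castRingHom ℂ)) a = 1 := by
  set χ := (quadraticChar (ZMod p)).ringHomComp (Int.castRingHom ℂ)
  rcases quadraticChar_dichotomy (F := ZMod p) ha with h | h <;>
    · have : χ a = ((quadraticChar (ZMod p) a : ℤ) : ℂ) := rfl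
      rw [this, h] <;> norm_num

private lemma inner_sum_zero (hp2 : p ≠ 2) (c : ZMod p) :
    (∑ x ∈ Finset.univ.erase (0 : ZMod p),
        (((quadraticChar (ZMod p)).ringHomComp (Int.castRingHom ℂ)) (c * x) *
            gaussSum ((quadraticChar (ZMod p)).ringHomComp (Int.castRingHom ℂ))
              ZMod.stdAddChar - 1) *
          ZMod.stdAddChar ((0 : ZMod p) * x))
      = 1 - (p : ℂ) := by
  classical
  haveI : NeZero p := ⟨(Fact.out : p.Prime).ne_zero⟩
  have hp1 : 1 ≤ p := (Fact.out : p.Prime).one_lt.le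
  set χ := (quadraticChar (ZMod p)).ringHomComp (Int.castRingHom ℂ) with hχdef
  have hchar2 : ringChar (ZMod p) ≠ 2 := by rw [ZMod.ringChar_zmod_n]; exact hp2
  have hχ1 : χ ≠ 1 :=
    (MulChar.ringHomComp_ne_one_iff Int.cast_injective).mpr (quadraticChar_ne_one hchar2)
  simp only [zero_mul, AddChar.map_zero_eq_one, mul_one]
  rw [Finset.sum_sub_distrib, Finset.sum_const, Finset.card_erase_of_mem (Finset.mem_univ _),
    Finset.card_univ, ZMod.card]
  have hs : ∑ x ∈ Finset.univ.erase (0 : ZMod p), χ (c * x) *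
      gaussSum χ ZMod.stdAddChar = 0 := by
    rw [← Finset.sum_mul]
    have h2 : ∑ x ∈ Finset.univ.erase (0 : ZMod p), χ (c * x)
        = ∑ x : ZMod p, χ (c * x) := by
      rw [← Finset.add_sum_erase _ _ (Finset.mem_univ (0 : ZMod p)), mul_zero,
        MulChar.map_zero, zero_add]
    rw [h2]
    have h3 : ∑ x : ZMod p, χ (c * x) = χ c * ∑ x : ZMod p, χ x := by
      rw [Finset.mul_sum]; exact Finset.sum_congr rfl fun x _ => map_mul χ c x
    rw [h3, MulChar.sum_eq_zero_of_ne_one hχ1, mul_zero, zero_mul]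
  rw [hs]
  simp only [nsmul_eq_mul, mul_one, zero_sub, Nat.cast_sub hp1]
  push_cast
  ring

private lemma inner_sum_ne_zero (hp2 : p ≠ 2) (c : ZMod p) {t : ZMod p} (ht : t ≠ 0) :
    (∑ x ∈ Finset.univ.erase (0 : ZMod p),
        (((quadraticChar (ZMod p)).ringHomComp (Int.castRingHom ℂ)) (c * x) *
            gaussSum ((quadraticChar (ZMod p)).ringHomComp (Int.castRingHom ℂ))
              ZMod.stdAddChar - 1) *
          ZMod.stdAddChar (t * x))
      = ((quadraticChar (ZMod p)).ringHomComp (Int.castRingHom ℂ)) (-c * t) * p + 1 := by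
  classical
  haveI : NeZero p := ⟨(Fact.out : p.Prime).ne_zero⟩
  set χ := (quadraticChar (ZMod p)).ringHomComp (Int.castRingHom ℂ) with hχdef
  set ψ : AddChar (ZMod p) ℂ := ZMod.stdAddChar with hψdef
  set G : ℂ := gaussSum χ ψ with hGdef
  have hchar2 : ringChar (ZMod p) ≠ 2 := by rw [ZMod.ringChar_zmod_n]; exact hp2
  have hχ1 : χ ≠ 1 :=
    (MulChar.ringHomComp_ne_one_iff Int.cast_injective).mpr (quadraticChar_ne_one hchar2)
  have hχq : χ.IsQuadratic := (quadraticChar_isQuadratic (ZMod p)).comp _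
  have hψprim : ψ.IsPrimitive := ZMod.isPrimitive_stdAddChar p
  have hsum2 : ∑ x ∈ Finset.univ.erase (0 : ZMod p), ψ (t * x) = -1 := by
    have h1 : ∑ x : ZMod p, ψ (t * x) = 0 := by
      rw [Finset.sum_congr rfl (fun x _ => by rw [mul_comm t x]),
        AddChar.sum_mulShift t hψprim]
      simp [ht]
    have h2 := Finset.add_sum_erase _ (fun x => ψ (t * x)) (Finset.mem_univ (0 : ZMod p))
    simp only [mul_zero, AddChar.map_zero_eq_one, h1] at h2
    linear_combination h2
  have hgs : gaussSum χ (AddChar.mulShift ψ t) = χ t * G := by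
    have h := gaussSum_mulShift χ ψ (Units.mk0 t ht)
    simp only [Units.val_mk0] at h
    calc gaussSum χ (AddChar.mulShift ψ t)
        = (χ t * χ t) * gaussSum χ (AddChar.mulShift ψ t) := by
          rw [chi_sq_one p hp2 ht, one_mul]
      _ = χ t * (χ t * gaussSum χ (AddChar.mulShift ψ t)) := by ring
      _ = χ t * G := by rw [h]
  have hsum1 : ∑ x ∈ Finset.univ.erase (0 : ZMod p), χ (c * x) * G * ψ (t * x)
      = χ c * χ t * G ^ 2 := by
    have h0 : ∑ x ∈ Finset.univ.erase (0 : ZMod p), χ (c * x) * G * ψ (t * x)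
        = ∑ x : ZMod p, χ (c * x) * G * ψ (t * x) := by
      rw [← Finset.add_sum_erase _ _ (Finset.mem_univ (0 : ZMod p)), mul_zero,
        MulChar.map_zero, zero_mul, zero_mul, zero_add]
    rw [h0]
    have h1 : ∀ x : ZMod p, χ (c * x) * G * ψ (t * x)
        = G * χ c * (χ x * AddChar.mulShift ψ t x) := by
      intro x
      rw [map_mul χ c x, AddChar.mulShift_apply]
      ring
    rw [Finset.sum_congr rfl (fun x _ => h1 x), ← Finset.mul_sum, ← gaussSum, hgs]
    ring
  have expand : ∀ x : ZMod p, (χ (c * x) * G - 1) * ψ (t * x)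
      = χ (c * x) * G * ψ (t * x) - ψ (t * x) := fun x => by ring
  rw [Finset.sum_congr rfl (fun x _ => expand x), Finset.sum_sub_distrib, hsum1, hsum2,
    gaussSum_sq hχ1 hχq hψprim, ZMod.card]
  have hval : χ c * χ t * (χ (-1) * (p : ℂ)) = χ (-c * t) * p := by
    have h : χ c * χ t * χ (-1) = χ (-c * t) := by
      rw [← map_mul, ← map_mul]
      congr 1
      ring
    calc χ c * χ t * (χ (-1) * (p : ℂ)) = (χ c * χ t * χ (-1)) * p := by ring
      _ = χ (-c * t) * p := by rw [h]
  rw [hval]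
  ring

end eval

/-- for an odd prime `p`, `n` coprime to `p`, and `k ≥ 1`, with
`G = G(1;p)` the classical quadratic Gauss sum, the sum over tuples of nonzero
residues `(r₁,…,r_k)` mod `p` with `r₁+⋯+r_k ≡ 0 (mod p)` of
`Π_i (((2n·rᵢ)/p)·G − 1)` equals `((p+1)(1-p)^k + (p-1)(p+1)^k)/(2p)`. -/
theorem sum_product_legendre_gauss (p : ℕ) [Fact p.Prime] (hp : 3 ≤ p)
    (n : ℤ) (hn : IsCoprime n (p : ℤ)) (k : ℕ) (hk : 1 ≤ k) :
    (∑ r ∈ Finset.univ.filter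
        (fun r : Fin k → ZMod p => (∀ i, r i ≠ 0) ∧ ∑ i, r i = 0),
      ∏ i, ((quadraticChar (ZMod p) (2 * (n : ZMod p) * r i) : ℂ) *
          (∑ b ∈ Finset.Icc 1 p,
            Complex.exp (2 * Real.pi * Complex.I * ((b : ℂ) ^ 2 / (p : ℂ)))) - 1)) =
      (((p : ℂ) + 1) * (1 - (p : ℂ)) ^ k + ((p : ℂ) - 1) * ((p : ℂ) + 1) ^ k) /
        (2 * (p : ℂ)) := by
  classical
  haveI : NeZero p := ⟨(Fact.out : p.Prime).ne_zero⟩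
  have hp2 : p ≠ 2 := by omega
  have hp1 : 1 ≤ p := by omega
  have hpz : (p : ℂ) ≠ 0 := Nat.cast_ne_zero.mpr (by omega)
  set χ : MulChar (ZMod p) ℂ := (quadraticChar (ZMod p)).ringHomComp (Int.castRingHom ℂ)
    with hχdef
  set ψ : AddChar (ZMod p) ℂ := ZMod.stdAddChar with hψdef
  have hchar2 : ringChar (ZMod p) ≠ 2 := by rw [ZMod.ringChar_zmod_n]; exact hp2
  have hχ1 : χ ≠ 1 :=
    (MulChar.ringHomComp_ne_one_iff Int.cast_injective).mpr (quadraticChar_ne_one hchar2)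
  have hGsum : (∑ b ∈ Finset.Icc 1 p,
      Complex.exp (2 * Real.pi * Complex.I * ((b : ℂ) ^ 2 / (p : ℂ))))
        = gaussSum χ ψ := by
    rw [icc_sum_eq p, sq_sum_eq_gaussSum p hp2]
  rw [hGsum]
  have hχapp : ∀ x : ZMod p, ((quadraticChar (ZMod p) x : ℤ) : ℂ) = χ x := fun x => rfl
  simp only [hχapp]
  rw [sum_tuples_eq p (fun x => χ (2 * (n : ZMod p) * x) * gaussSum χ ψ - 1) k]
  -- abbreviate c
  set c : ZMod p := 2 * (n : ZMod p) with hcdef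
  have hc : c ≠ 0 := by
    apply mul_ne_zero
    · intro h
      have h2 : ((2 : ℕ) : ZMod p) = 0 := by push_cast; exact h
      rw [ZMod.natCast_eq_zero_iff] at h2
      have := Nat.le_of_dvd (by norm_num) h2
      omega
    · intro h
      rw [ZMod.intCast_zmod_eq_zero_iff_dvd] at h
      have hu : IsUnit ((p : ℤ)) := hn.isUnit_of_dvd' h dvd_rfl
      rcases Int.isUnit_iff.mp hu with h' | h' <;> omega
  -- split the t-sum at t = 0
  rw [← Finset.add_sum_erase _ _ (Finset.mem_univ (0 : ZMod p))]
  have h0 : (∑ x ∈ Finset.univ.erase (0 : ZMod p),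
      (χ (c * x) * gaussSum χ ψ - 1) * ψ ((0 : ZMod p) * x)) = 1 - (p : ℂ) :=
    inner_sum_zero p hp2 c
  rw [h0]
  have hsplit : ∀ t ∈ Finset.univ.erase (0 : ZMod p),
      (∑ x ∈ Finset.univ.erase (0 : ZMod p),
        (χ (c * x) * gaussSum χ ψ - 1) * ψ (t * x)) ^ k
      = ((((p : ℂ) + 1) ^ k + (1 - (p : ℂ)) ^ k) / 2
          + χ (-c * t) * ((((p : ℂ) + 1) ^ k - (1 - (p : ℂ)) ^ k) / 2)) := by
    intro t htz
    have htne : t ≠ 0 := (Finset.mem_erase.mp htz).1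
    rw [inner_sum_ne_zero p hp2 c htne]
    have harg : -c * t ≠ 0 := mul_ne_zero (neg_ne_zero.mpr hc) htne
    rcases quadraticChar_dichotomy (F := ZMod p) harg with h | h
    · have hχeq : χ (-c * t) = 1 := by
        rw [show χ (-c * t) = ((quadraticChar (ZMod p) (-c * t) : ℤ) : ℂ) from rfl, h]
        norm_num
      rw [hχeq]; ring
    · have hχeq : χ (-c * t) = -1 := by
        rw [show χ (-c * t) = ((quadraticChar (ZMod p) (-c * t) : ℤ) : ℂ) from rfl, h]
        norm_num
      rw [hχeq, show ((-1 : ℂ) * (p : ℂ) + 1) = (1 - (p : ℂ)) from by ring]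
      ring
  rw [Finset.sum_congr rfl hsplit, Finset.sum_add_distrib, Finset.sum_const,
    ← Finset.sum_mul]
  have hχsum : ∑ t ∈ Finset.univ.erase (0 : ZMod p), χ (-c * t) = 0 := by
    have h2 : ∑ t ∈ Finset.univ.erase (0 : ZMod p), χ (-c * t)
        = ∑ t : ZMod p, χ (-c * t) := by
      rw [← Finset.add_sum_erase _ (fun t => χ (-c * t)) (Finset.mem_univ (0 : ZMod p)),
        mul_zero, MulChar.map_zero, zero_add]
    rw [h2]
    have h3 := Fintype.sum_bijective (fun t : ZMod p => -c * t)
      (mulLeft_bijective₀ (-c) (neg_ne_zero.mpr hc))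
      (fun t => χ (-c * t)) (fun u => χ u) (fun x => rfl)
    rw [h3, MulChar.sum_eq_zero_of_ne_one hχ1]
  rw [hχsum, zero_mul, add_zero, Finset.card_erase_of_mem (Finset.mem_univ _),
    Finset.card_univ, ZMod.card, nsmul_eq_mul, Nat.cast_sub hp1]
  push_cast
  field_simp
  ring
end
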